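/- arXiv:1612.01001 — 9 statements merged into one kernel-verified Lean document; each statement's English description precedes it below -/
import Mathlib

section
/- Let G be a locally compact group with Property PL. Suppose G acts on a nonempty metric space X by uniformly Lipschitz transformations, i.e. there is a constant C ≥ 1 such that each g ∈ G acts as a C-Lipschitz bijection of X, and the action is locally bounded, i.e. for every compact subset K of G and every x ∈ X the set K·x is bounded. Then the action is either bounded (every orbit is bounded) or metrically proper (for every bounded subset B of X, the set {g ∈ G : B ∩ gB ≠ ∅} has compact closure in G). -/
open scoped NNReal Topology

/-- A semigroup length on a topological group: nonnegative, bounded on compact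
subsets, and subadditive. -/
def IsSemigroupLength {G : Type*} [Group G] [TopologicalSpace G] (L : G → ℝ) : Prop :=
  (∀ x, 0 ≤ L x) ∧ (∀ K : Set G, IsCompact K → ∃ M : ℝ, ∀ x ∈ K, L x ≤ M) ∧
    (∀ x y, L (x * y) ≤ L x + L y)

/-- A length is a symmetric semigroup length. -/
def IsLength {G : Type*} [Group G] [TopologicalSpace G] (L : G → ℝ) : Prop :=
  IsSemigroupLength L ∧ ∀ x, L x = L x⁻¹

/-- A length is proper if all its sublevel sets have compact closure. -/
def IsProperLength {G : Type*} [Group G] [TopologicalSpace G] (L : G → ℝ) : Prop :=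
  ∀ c : ℝ, IsCompact (closure {x : G | L x ≤ c})

/-- Property PL: every length is either bounded or proper. -/
def HasPL (G : Type*) [Group G] [TopologicalSpace G] : Prop :=
  ∀ L : G → ℝ, IsLength L → (∃ M : ℝ, ∀ x, L x ≤ M) ∨ IsProperLength L

/-- Strong Property PL: every semigroup length is either bounded or proper. -/
def HasStrongPL (G : Type*) [Group G] [TopologicalSpace G] : Prop :=
  ∀ L : G → ℝ, IsSemigroupLength L → (∃ M : ℝ, ∀ x, L x ≤ M) ∨ IsProperLength L

/-!
The supremum `d(x, y) = ⨆ g, dist (g • x) (g • y)` is a `G`-invariant pseudometric with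
`dist ≤ d ≤ C * dist`. For a base point `x₀`, `g ↦ d(x₀, g • x₀)` is then a length on `G`: it is
subadditive and symmetric by invariance, and bounded on compact sets by local boundedness.
If this length is bounded, so is every orbit; if it is proper, then `B ∩ g • B ≠ ∅` forces
`g` into one of its sublevel sets, which has compact closure.
-/

section InvariantDist

variable {G : Type*} [Group G] {X : Type*} [MetricSpace X] {ρ : G →* Equiv.Perm X} {C : ℝ≥0}

variable (ρ) in
noncomputable def invariantDist (x y : X) : ℝ := ⨆ g : G, dist (ρ g x) (ρ g y)

theorem bddAbove_range_dist_apply (hLip : ∀ g : G, LipschitzWith C (ρ g)) (x y : X) :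
    BddAbove (Set.range fun g : G => dist (ρ g x) (ρ g y)) :=
  ⟨C * dist x y, Set.forall_mem_range.2 fun g => (hLip g).dist_le_mul x y⟩

theorem invariantDist_le (hLip : ∀ g : G, LipschitzWith C (ρ g)) (x y : X) :
    invariantDist ρ x y ≤ C * dist x y :=
  ciSup_le fun g => (hLip g).dist_le_mul x y

theorem dist_le_invariantDist (hLip : ∀ g : G, LipschitzWith C (ρ g)) (x y : X) :
    dist x y ≤ invariantDist ρ x y := by
  simpa [invariantDist] using le_ciSup (bddAbove_range_dist_apply hLip x y) 1

theorem invariantDist_comm (x y : X) : invariantDist ρ x y = invariantDist ρ y x := by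
  simp only [invariantDist, dist_comm]

theorem invariantDist_triangle (hLip : ∀ g : G, LipschitzWith C (ρ g)) (x y z : X) :
    invariantDist ρ x z ≤ invariantDist ρ x y + invariantDist ρ y z :=
  ciSup_le fun g => (dist_triangle (ρ g x) (ρ g y) (ρ g z)).trans <|
    add_le_add (le_ciSup (bddAbove_range_dist_apply hLip x y) g)
      (le_ciSup (bddAbove_range_dist_apply hLip y z) g)

theorem invariantDist_apply_apply (h : G) (x y : X) :
    invariantDist ρ (ρ h x) (ρ h y) = invariantDist ρ x y := by
  simp only [invariantDist, ← Equiv.Perm.mul_apply, ← map_mul]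
  exact (Equiv.mulRight h).iSup_congr fun _ => rfl

end InvariantDist

section OrbitLength

variable {G : Type*} [Group G] {X : Type*} [MetricSpace X] {ρ : G →* Equiv.Perm X} {C : ℝ≥0}

variable (ρ) in
noncomputable def orbitLength (x₀ : X) (g : G) : ℝ := invariantDist ρ x₀ (ρ g x₀)

theorem orbitLength_mul_le (hLip : ∀ g : G, LipschitzWith C (ρ g)) (x₀ : X) (g h : G) :
    orbitLength ρ x₀ (g * h) ≤ orbitLength ρ x₀ g + orbitLength ρ x₀ h := by
  have hgh : invariantDist ρ (ρ g x₀) (ρ (g * h) x₀) = orbitLength ρ x₀ h := by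
    rw [map_mul, Equiv.Perm.mul_apply, invariantDist_apply_apply, orbitLength]
  exact hgh ▸ invariantDist_triangle hLip _ _ _

theorem orbitLength_inv (x₀ : X) (g : G) : orbitLength ρ x₀ g⁻¹ = orbitLength ρ x₀ g := by
  conv_rhs => rw [orbitLength, ← invariantDist_apply_apply g⁻¹, invariantDist_comm]
  simp [orbitLength, ← Equiv.Perm.mul_apply]

theorem dist_apply_le_orbitLength (hLip : ∀ g : G, LipschitzWith C (ρ g)) (x₀ : X) (g : G) :
    dist (ρ g x₀) x₀ ≤ orbitLength ρ x₀ g :=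
  dist_comm x₀ (ρ g x₀) ▸ dist_le_invariantDist hLip _ _

theorem isLength_orbitLength [TopologicalSpace G] (hLip : ∀ g : G, LipschitzWith C (ρ g))
    (x₀ : X) (hloc : ∀ K : Set G, IsCompact K → Bornology.IsBounded ((fun g => ρ g x₀) '' K)) :
    IsLength (orbitLength ρ x₀) := by
  refine ⟨⟨fun g => dist_nonneg.trans (dist_apply_le_orbitLength hLip x₀ g), fun K hK => ?_,
    orbitLength_mul_le hLip x₀⟩, fun g => (orbitLength_inv x₀ g).symm⟩
  obtain ⟨r, hr⟩ := (Metric.isBounded_iff_subset_closedBall x₀).1 (hloc K hK)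
  refine ⟨C * r, fun g hg => (invariantDist_le hLip _ _).trans ?_⟩
  rw [dist_comm]
  exact mul_le_mul_of_nonneg_left (hr ⟨g, hg, rfl⟩) C.coe_nonneg

theorem isBounded_range_apply_of_orbitLength_le (hLip : ∀ g : G, LipschitzWith C (ρ g))
    {x₀ : X} {M : ℝ} (hM : ∀ g, orbitLength ρ x₀ g ≤ M) (x : X) :
    Bornology.IsBounded (Set.range fun g => ρ g x) := by
  refine (Metric.isBounded_iff_subset_closedBall x₀).2 ⟨C * dist x x₀ + M, ?_⟩
  rintro _ ⟨g, rfl⟩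
  calc dist (ρ g x) x₀ ≤ dist (ρ g x) (ρ g x₀) + dist (ρ g x₀) x₀ := dist_triangle _ _ _
    _ ≤ C * dist x x₀ + M :=
      add_le_add ((hLip g).dist_le_mul x x₀) ((dist_apply_le_orbitLength hLip x₀ g).trans (hM g))

theorem orbitLength_le_of_inter_nonempty (hLip : ∀ g : G, LipschitzWith C (ρ g))
    {x₀ : X} {r : ℝ} {B : Set X} (hB : B ⊆ Metric.closedBall x₀ r) {g : G}
    (hg : (B ∩ ρ g '' B).Nonempty) : orbitLength ρ x₀ g ≤ C * r + C * r := by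
  obtain ⟨_, hb, b, hb', rfl⟩ := hg
  have hball : ∀ y ∈ B, invariantDist ρ y x₀ ≤ C * r := fun y hy =>
    (invariantDist_le hLip y x₀).trans
      (mul_le_mul_of_nonneg_left (Metric.mem_closedBall.1 (hB hy)) C.coe_nonneg)
  calc orbitLength ρ x₀ g
      ≤ invariantDist ρ x₀ (ρ g b) + invariantDist ρ (ρ g b) (ρ g x₀) :=
        invariantDist_triangle hLip _ _ _
    _ ≤ C * r + C * r := by
      rw [invariantDist_apply_apply, invariantDist_comm]
      exact add_le_add (hball _ hb) (hball b hb')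

end OrbitLength

theorem stmt_0_general {G : Type*} [Group G] [TopologicalSpace G] (hPL : HasPL G)
    {X : Type*} [MetricSpace X] [Nonempty X]
    (ρ : G →* Equiv.Perm X) (C : ℝ≥0)
    (hLip : ∀ g : G, LipschitzWith C (ρ g))
    (hloc : ∀ K : Set G, IsCompact K → ∀ x : X,
      Bornology.IsBounded ((fun g => ρ g x) '' K)) :
    (∀ x : X, Bornology.IsBounded (Set.range fun g => ρ g x)) ∨
      (∀ B : Set X, Bornology.IsBounded B →
        IsCompact (closure {g : G | (B ∩ (⇑(ρ g) '' B)).Nonempty})) := by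
  obtain ⟨x₀⟩ := ‹Nonempty X›
  rcases hPL _ (isLength_orbitLength hLip x₀ fun K hK => hloc K hK x₀) with ⟨M, hM⟩ | hproper
  · exact .inl (isBounded_range_apply_of_orbitLength_le hLip hM)
  · refine .inr fun B hB => ?_
    obtain ⟨r, hr⟩ := (Metric.isBounded_iff_subset_closedBall x₀).1 hB
    exact (hproper (C * r + C * r)).of_isClosed_subset isClosed_closure
      (closure_mono fun g hg => orbitLength_le_of_inter_nonempty hLip hr hg)

/-- a locally compact group with Property PL acts on a nonempty metric
space by uniformly Lipschitz bijections, with a locally bounded action; then the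
action is bounded or metrically proper. -/
theorem stmt_0 {G : Type*} [Group G] [TopologicalSpace G] [IsTopologicalGroup G]
    [LocallyCompactSpace G] (hPL : HasPL G)
    {X : Type*} [MetricSpace X] [Nonempty X]
    (ρ : G →* Equiv.Perm X) (C : ℝ≥0) (hC : 1 ≤ C)
    (hLip : ∀ g : G, LipschitzWith C (ρ g))
    (hloc : ∀ K : Set G, IsCompact K → ∀ x : X,
      Bornology.IsBounded ((fun g => ρ g x) '' K)) :
    (∀ x : X, Bornology.IsBounded (Set.range fun g => ρ g x)) ∨
      (∀ B : Set X, Bornology.IsBounded B →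
        IsCompact (closure {g : G | (B ∩ (⇑(ρ g) '' B)).Nonempty})) :=
  stmt_0_general hPL ρ C hLip hloc
end

section
/- Let G be a compactly generated locally compact group. Suppose that for every subset S of G generating G as a semigroup, either S has compact closure or G = Sⁿ for some natural number n. Then G has strong Property PL, i.e. every semigroup length on G is either bounded or proper. -/
open scoped NNReal Topology Pointwise

/-!
If `K` generates `G` and `M` bounds `L` on the compact set `{1} ∪ K ∪ K⁻¹`, then for every
`c ≥ M` the sublevel set `{L ≤ c}` generates `G` as a semigroup. By hypothesis it then either has
compact closure, or some power of it is all of `G`; in the latter case subadditivity bounds `L`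
by `L 1 + n c` everywhere.
-/

theorem Subgroup.exists_pos_pow_mem_of_closure_eq_top {G : Type*} [Group G] {K S : Set G}
    (hK : Subgroup.closure K = ⊤) (hS₁ : (1 : G) ∈ S) (hKS : K ∪ K⁻¹ ⊆ S) (g : G) :
    ∃ n : ℕ, 0 < n ∧ g ∈ S ^ n := by
  have hg : g ∈ Subgroup.closure K := hK ▸ Subgroup.mem_top g
  induction hg using Subgroup.closure_induction'' with
  | mem x hx => exact ⟨1, one_pos, by simpa using hKS (Or.inl hx)⟩
  | inv_mem x hx => exact ⟨1, one_pos, by simpa using hKS (Or.inr (Set.inv_mem_inv.mpr hx))⟩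
  | one => exact ⟨1, one_pos, by simpa using hS₁⟩
  | mul x y _ _ hx hy =>
    obtain ⟨m, hm, hxm⟩ := hx
    obtain ⟨n, -, hyn⟩ := hy
    exact ⟨m + n, by omega, pow_add S m n ▸ Set.mul_mem_mul hxm hyn⟩

theorem le_of_mem_pow_setOf_le {M : Type*} [Monoid M] {L : M → ℝ}
    (hL : ∀ x y, L (x * y) ≤ L x + L y) {c : ℝ} {n : ℕ} {x : M}
    (hx : x ∈ {y | L y ≤ c} ^ n) : L x ≤ L 1 + n * c := by
  induction n generalizing x with
  | zero =>
    obtain rfl : x = 1 := by simpa using hx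
    simp
  | succ n ih =>
    rw [pow_succ] at hx
    obtain ⟨a, ha, b, hb : L b ≤ c, rfl⟩ := hx
    calc L (a * b) ≤ L a + L b := hL a b
      _ ≤ L 1 + n * c + c := add_le_add (ih ha) hb
      _ = L 1 + (n + 1 : ℕ) * c := by push_cast; ring

theorem stmt_4_general {G : Type*} [Group G] [TopologicalSpace G] [IsTopologicalGroup G]
    (hcg : ∃ K : Set G, IsCompact K ∧ Subgroup.closure K = ⊤)
    (h : ∀ S : Set G, (∀ g : G, ∃ n : ℕ, 0 < n ∧ g ∈ S ^ n) →
      IsCompact (closure S) ∨ ∃ n : ℕ, S ^ n = Set.univ) :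
    HasStrongPL G := by
  rintro L ⟨-, hbdd, hsub⟩
  obtain ⟨K, hK, hgen⟩ := hcg
  obtain ⟨M, hM⟩ := hbdd _ ((hK.union hK.inv).insert 1)
  by_cases hb : ∃ B : ℝ, ∀ x, L x ≤ B
  · exact Or.inl hb
  refine Or.inr fun c' => ?_
  set c := max c' M
  have hsemigen : ∀ g : G, ∃ n : ℕ, 0 < n ∧ g ∈ {y | L y ≤ c} ^ n :=
    Subgroup.exists_pos_pow_mem_of_closure_eq_top hgen
      ((hM 1 (Set.mem_insert _ _)).trans (le_max_right _ _))
      fun x hx => (hM x (Or.inr hx)).trans (le_max_right _ _)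
  rcases h _ hsemigen with hcomp | ⟨n, hn⟩
  · exact hcomp.of_isClosed_subset isClosed_closure
      (closure_mono fun x (hx : L x ≤ c') => hx.trans (le_max_left _ _))
  · exact absurd ⟨L 1 + n * c, fun x => le_of_mem_pow_setOf_le hsub (hn ▸ Set.mem_univ x)⟩ hb

/-- a compactly generated locally compact group in which every
semigroup-generating subset either has compact closure or satisfies `G = Sⁿ`
for some `n`, has strong Property PL. -/
theorem stmt_4 {G : Type*} [Group G] [TopologicalSpace G] [IsTopologicalGroup G]
    [LocallyCompactSpace G]
    (hcg : ∃ K : Set G, IsCompact K ∧ Subgroup.closure K = ⊤)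
    (h : ∀ S : Set G, (∀ g : G, ∃ n : ℕ, 0 < n ∧ g ∈ S ^ n) →
      IsCompact (closure S) ∨ ∃ n : ℕ, S ^ n = Set.univ) :
    HasStrongPL G :=
  stmt_4_general hcg h
end

section
/- Let G be a locally compact group and K a compact normal subgroup of G. Then G has Property PL if and only if the quotient group G/K has Property PL. -/
open scoped NNReal Topology

/-!
A length on `G ⧸ N` pulls back to a length on `G`, and boundedness and properness descend
along the continuous surjection `G → G ⧸ N`. Conversely, a length `L` on `G` is bounded by
some `M` on the compact subgroup `N`, so by subadditivity it varies by at most `M` along each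
coset; its supremum over cosets is then a length on `G ⧸ N` within `M` of `L`. Since `N` is
compact the quotient map is proper, so this supremum is bounded or proper exactly when `L` is.
-/

open scoped Pointwise
open Set QuotientGroup

theorem isProperMap_mk_of_isCompact {G : Type*} [Group G] [TopologicalSpace G]
    [IsTopologicalGroup G] {N : Subgroup G} (hN : IsCompact (N : Set G)) :
    IsProperMap ((↑) : G → G ⧸ N) := by
  refine isProperMap_iff_isClosedMap_and_compact_fibers.2
    ⟨continuous_mk, isClosedMap_coe hN, fun y => ?_⟩
  obtain ⟨x, rfl⟩ := mk_surjective y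
  rw [← image_singleton, preimage_image_mk_eq_mul]
  exact isCompact_singleton.mul hN

section Comap

variable {G H : Type*} [Group G] [TopologicalSpace G] [Group H] [TopologicalSpace H]

theorem IsLength.comp {L : H → ℝ} (hL : IsLength L) (f : G →* H) (hf : Continuous f) :
    IsLength (L ∘ f) := by
  obtain ⟨⟨hnonneg, hbdd, hsub⟩, hsymm⟩ := hL
  refine ⟨⟨fun x => hnonneg _, fun K hK => ?_, fun x y => ?_⟩, fun x => ?_⟩
  · obtain ⟨M, hM⟩ := hbdd _ (hK.image hf)
    exact ⟨M, fun x hx => hM _ (mem_image_of_mem f hx)⟩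
  · simpa only [Function.comp_apply, map_mul] using hsub (f x) (f y)
  · simpa only [Function.comp_apply, map_inv] using hsymm (f x)

theorem IsProperLength.of_comp [R1Space H] {L : H → ℝ} {f : G → H} (hf : Continuous f)
    (hsurj : Function.Surjective f) (hL : IsProperLength (L ∘ f)) : IsProperLength L :=
  fun c => ((hL c).image hf).closure_of_subset fun y hy => by
    obtain ⟨x, rfl⟩ := hsurj y
    exact ⟨x, subset_closure hy, rfl⟩

theorem IsProperLength.of_comp_le_add {L : G → ℝ} {L' : H → ℝ} {f : G → H}
    (hf : IsProperMap f) (hL' : IsProperLength L') (C : ℝ) (hle : ∀ x, L' (f x) ≤ L x + C) :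
    IsProperLength L := fun c =>
  (hf.isCompact_preimage (hL' (c + C))).of_isClosed_subset isClosed_closure <|
    closure_minimal
      (fun x (hx : L x ≤ c) => subset_closure (show L' (f x) ≤ c + C by linarith [hle x]))
      (isClosed_closure.preimage hf.continuous)

theorem HasPL.of_surjective [R1Space H] (h : HasPL G) (f : G →* H)
    (hf : Continuous f) (hsurj : Function.Surjective f) : HasPL H := fun _ hL =>
  (h _ (hL.comp f hf)).imp (fun ⟨M, hM⟩ => ⟨M, hsurj.forall.2 hM⟩) (.of_comp hf hsurj)

end Comap

section FiberSup

variable {G : Type*} [Group G] {N : Subgroup G} {L : G → ℝ} {M : ℝ}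

noncomputable def fiberSup (N : Subgroup G) (L : G → ℝ) (y : G ⧸ N) : ℝ :=
  sSup (L '' {x : G | (x : G ⧸ N) = y})

theorem nonempty_image_fiber (y : G ⧸ N) : (L '' {x : G | (x : G ⧸ N) = y}).Nonempty := by
  obtain ⟨x, hx⟩ := mk_surjective y
  exact ⟨L x, x, hx, rfl⟩

theorem fiberSup_inv [N.Normal] (hsymm : ∀ x, L x = L x⁻¹) (y : G ⧸ N) :
    fiberSup N L y⁻¹ = fiberSup N L y := by
  have hfiber : {x : G | (x : G ⧸ N) = y⁻¹} = {x : G | (x : G ⧸ N) = y}⁻¹ := by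
    ext x
    simp [inv_eq_iff_eq_inv]
  rw [fiberSup, hfiber, image_inv_of_apply_inv_eq fun x _ => (hsymm x).symm, fiberSup]

variable (hsub : ∀ x y, L (x * y) ≤ L x + L y) (hM : ∀ n ∈ N, L n ≤ M)
include hsub hM

theorem le_add_of_mk_eq {x z : G} (h : (x : G ⧸ N) = z) : L z ≤ L x + M :=
  calc L z = L (x * (x⁻¹ * z)) := by rw [mul_inv_cancel_left]
    _ ≤ L x + L (x⁻¹ * z) := hsub _ _
    _ ≤ L x + M := by gcongr; exact hM _ (QuotientGroup.eq.1 h)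

theorem bddAbove_image_fiber (y : G ⧸ N) : BddAbove (L '' {x : G | (x : G ⧸ N) = y}) := by
  obtain ⟨x, rfl⟩ := mk_surjective y
  exact ⟨L x + M, by rintro _ ⟨z, hz, rfl⟩; exact le_add_of_mk_eq hsub hM hz.symm⟩

theorem le_fiberSup {x : G} {y : G ⧸ N} (h : (x : G ⧸ N) = y) : L x ≤ fiberSup N L y :=
  le_csSup (bddAbove_image_fiber hsub hM y) ⟨x, h, rfl⟩

theorem fiberSup_mk_le (x : G) : fiberSup N L x ≤ L x + M :=
  csSup_le (nonempty_image_fiber _) <| by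
    rintro _ ⟨z, hz, rfl⟩
    exact le_add_of_mk_eq hsub hM hz.symm

theorem fiberSup_mul_le [N.Normal] (y z : G ⧸ N) :
    fiberSup N L (y * z) ≤ fiberSup N L y + fiberSup N L z := by
  obtain ⟨a, rfl⟩ := mk_surjective y
  refine csSup_le (nonempty_image_fiber _) ?_
  rintro _ ⟨x, hx, rfl⟩
  have hx' : ((a⁻¹ * x : G) : G ⧸ N) = z := by
    rw [mk_mul, mk_inv, hx, inv_mul_cancel_left]
  calc L x = L (a * (a⁻¹ * x)) := by rw [mul_inv_cancel_left]
    _ ≤ L a + L (a⁻¹ * x) := hsub _ _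
    _ ≤ fiberSup N L a + fiberSup N L z :=
      add_le_add (le_fiberSup hsub hM rfl) (le_fiberSup hsub hM hx')

end FiberSup

section Quotient

variable {G : Type*} [Group G] [TopologicalSpace G] [IsTopologicalGroup G]
  {N : Subgroup G} [N.Normal]

theorem IsLength.fiberSup {L : G → ℝ} (hL : IsLength L) (hN : IsCompact (N : Set G)) :
    IsLength (fiberSup N L) := by
  obtain ⟨⟨hnonneg, hbdd, hsub⟩, hsymm⟩ := hL
  obtain ⟨M, hM⟩ := hbdd N hN
  refine ⟨⟨fun y => ?_, fun K hK => ?_, fiberSup_mul_le hsub hM⟩,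
    fun y => (fiberSup_inv hsymm y).symm⟩
  · obtain ⟨x, rfl⟩ := mk_surjective y
    exact (hnonneg x).trans (le_fiberSup hsub hM rfl)
  · obtain ⟨B, hB⟩ := hbdd _ ((isProperMap_mk_of_isCompact hN).isCompact_preimage hK)
    refine ⟨B, fun y hy => csSup_le (nonempty_image_fiber y) ?_⟩
    rintro _ ⟨x, rfl, rfl⟩
    exact hB x hy

theorem HasPL.of_quotient (hN : IsCompact (N : Set G)) (h : HasPL (G ⧸ N)) : HasPL G := by
  intro L hL
  obtain ⟨M, hM⟩ := hL.1.2.1 N hN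
  have hsub := hL.1.2.2
  rcases h _ (hL.fiberSup hN) with ⟨B, hB⟩ | hP
  · exact .inl ⟨B, fun x => (le_fiberSup hsub hM rfl).trans (hB x)⟩
  · exact .inr (hP.of_comp_le_add (isProperMap_mk_of_isCompact hN) M (fiberSup_mk_le hsub hM))

end Quotient

theorem stmt_5_general {G : Type*} [Group G] [TopologicalSpace G] [IsTopologicalGroup G]
    (N : Subgroup G) [N.Normal] (hN : IsCompact (N : Set G)) :
    HasPL G ↔ HasPL (G ⧸ N) :=
  ⟨fun h => h.of_surjective (mk' N) continuous_mk mk_surjective, HasPL.of_quotient hN⟩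

/-- for a compact normal subgroup `K` of a locally compact group `G`,
`G` has Property PL iff `G/K` has Property PL. -/
theorem stmt_5 {G : Type*} [Group G] [TopologicalSpace G] [IsTopologicalGroup G]
    [LocallyCompactSpace G] (N : Subgroup G) [N.Normal] (hN : IsCompact (N : Set G)) :
    HasPL G ↔ HasPL (G ⧸ N) :=
  stmt_5_general N hN
end

section
/- Let G be a locally compact group and suppose G has three closed subsets K, K', D with K and K' compact and G = K·D·K' (every element of G is a product k·d·k' with k ∈ K, d ∈ D, k' ∈ K'). Let L be a length on G. Then: (a) L is bounded on G if and only if the restriction of L to D is bounded; (b) L is proper on G if and only if for every n, the set {d ∈ D : L(d) ≤ n} has compact closure. -/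
open scoped NNReal Topology

/-!
Writing `g = k d k'` with `k ∈ K`, `k' ∈ K'`, subadditivity gives
`L d - C ≤ L g ≤ L d + C` for a constant `C` bounding `L` on the compact sets `K`, `K'`,
`K⁻¹`, `K'⁻¹`. Hence `L` is bounded iff it is bounded on `D`, and each sublevel set of `L`
lies in `K · (a sublevel set of L|_D) · K'`, which has compact closure when the sublevel
sets of `L|_D` do.
-/

open scoped Pointwise

namespace IsSemigroupLength

variable {G : Type*} [Group G] [TopologicalSpace G] {L : G → ℝ} {K K' D : Set G}

theorem map_mul_mul_le (hL : IsSemigroupLength L) (a b c : G) :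
    L (a * b * c) ≤ L a + L b + L c := by
  linarith [hL.2.2 (a * b) c, hL.2.2 a b]

theorem exists_map_mul_mul_le (hL : IsSemigroupLength L) (hK : IsCompact K)
    (hK' : IsCompact K') :
    ∃ C, ∀ k ∈ K, ∀ d, ∀ k' ∈ K', L (k * d * k') ≤ L d + C := by
  obtain ⟨M, hM⟩ := hL.2.1 K hK
  obtain ⟨M', hM'⟩ := hL.2.1 K' hK'
  exact ⟨M + M', fun k hk d k' hk' => by
    linarith [hL.map_mul_mul_le k d k', hM k hk, hM' k' hk']⟩

theorem exists_le_map_mul_mul [IsTopologicalGroup G] (hL : IsSemigroupLength L)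
    (hK : IsCompact K) (hK' : IsCompact K') :
    ∃ C, ∀ k ∈ K, ∀ d, ∀ k' ∈ K', L d ≤ L (k * d * k') + C := by
  obtain ⟨C, hC⟩ := hL.exists_map_mul_mul_le hK.inv hK'.inv
  refine ⟨C, fun k hk d k' hk' => ?_⟩
  have := hC k⁻¹ (Set.inv_mem_inv.2 hk) (k * d * k') k'⁻¹ (Set.inv_mem_inv.2 hk')
  rwa [show k⁻¹ * (k * d * k') * k'⁻¹ = d by group] at this

theorem bddAbove_iff_of_forall_eq_mul_mul (hL : IsSemigroupLength L) (hK : IsCompact K)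
    (hK' : IsCompact K') (hdec : ∀ g, ∃ k ∈ K, ∃ d ∈ D, ∃ k' ∈ K', g = k * d * k') :
    (∃ M, ∀ g, L g ≤ M) ↔ ∃ M, ∀ d ∈ D, L d ≤ M := by
  refine ⟨fun ⟨M, hM⟩ => ⟨M, fun d _ => hM d⟩, fun ⟨M, hM⟩ => ?_⟩
  obtain ⟨C, hC⟩ := hL.exists_map_mul_mul_le hK hK'
  refine ⟨M + C, fun g => ?_⟩
  obtain ⟨k, hk, d, hd, k', hk', rfl⟩ := hdec g
  linarith [hC k hk d k' hk', hM d hd]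

theorem isProperLength_iff_of_forall_eq_mul_mul [IsTopologicalGroup G]
    (hL : IsSemigroupLength L) (hK : IsCompact K) (hK' : IsCompact K')
    (hdec : ∀ g, ∃ k ∈ K, ∃ d ∈ D, ∃ k' ∈ K', g = k * d * k') :
    IsProperLength L ↔ ∀ c, IsCompact (closure {d ∈ D | L d ≤ c}) := by
  refine ⟨fun hp c => (hp c).of_isClosed_subset isClosed_closure
    (closure_mono fun d hd => hd.2), fun h c => ?_⟩
  obtain ⟨C, hC⟩ := hL.exists_le_map_mul_mul hK hK'
  have hsub : {g | L g ≤ c} ⊆ K * closure {d ∈ D | L d ≤ c + C} * K' := by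
    intro g hg
    obtain ⟨k, hk, d, hd, k', hk', rfl⟩ := hdec g
    have hLd : L d ≤ c + C := by
      linarith [hC k hk d k' hk', show L (k * d * k') ≤ c from hg]
    exact Set.mul_mem_mul (Set.mul_mem_mul hk (subset_closure ⟨hd, hLd⟩)) hk'
  exact ((hK.mul (h (c + C))).mul hK').closure_of_subset hsub

end IsSemigroupLength

theorem stmt_6_general {G : Type*} [Group G] [TopologicalSpace G] [IsTopologicalGroup G]
    (K K' D : Set G)
    (hK : IsCompact K) (hK' : IsCompact K')
    (hdec : ∀ g : G, ∃ k ∈ K, ∃ d ∈ D, ∃ k' ∈ K', g = k * d * k')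
    (L : G → ℝ) (hL : IsLength L) :
    ((∃ M : ℝ, ∀ g : G, L g ≤ M) ↔ (∃ M : ℝ, ∀ d ∈ D, L d ≤ M)) ∧
      (IsProperLength L ↔ ∀ c : ℝ, IsCompact (closure {d ∈ D | L d ≤ c})) :=
  ⟨hL.1.bddAbove_iff_of_forall_eq_mul_mul hK hK' hdec,
    hL.1.isProperLength_iff_of_forall_eq_mul_mul hK hK' hdec⟩

/-- if `G = K·D·K'` with `K, K'` compact and `K, K', D` closed, then a
length on `G` is bounded (resp. proper) iff its restriction to `D` is so. -/
theorem stmt_6 {G : Type*} [Group G] [TopologicalSpace G] [IsTopologicalGroup G]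
    [LocallyCompactSpace G] (K K' D : Set G)
    (hKcl : IsClosed K) (hK'cl : IsClosed K') (hDcl : IsClosed D)
    (hK : IsCompact K) (hK' : IsCompact K')
    (hdec : ∀ g : G, ∃ k ∈ K, ∃ d ∈ D, ∃ k' ∈ K', g = k * d * k')
    (L : G → ℝ) (hL : IsLength L) :
    ((∃ M : ℝ, ∀ g : G, L g ≤ M) ↔ (∃ M : ℝ, ∀ d ∈ D, L d ≤ M)) ∧
      (IsProperLength L ↔ ∀ c : ℝ, IsCompact (closure {d ∈ D | L d ≤ c})) :=
  stmt_6_general K K' D hK hK' hdec L hL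
end

section
/- Let n ≥ 2 and let G be the group of surjective isometries of the Euclidean space ℝⁿ (with composition as group law). Let L : G → [0,∞) be subadditive (L(g∘h) ≤ L(g) + L(h) for all g,h ∈ G) and locally bounded in the sense that for every r > 0, L is bounded on the set {g ∈ G : ‖g(0)‖ ≤ r}. Then either L is bounded on G, or L is proper in the sense that for every n there exists r with {g ∈ G : L(g) ≤ n} ⊆ {g ∈ G : ‖g(0)‖ ≤ r}. -/
/-!
The stabiliser of `0` is the orthogonal group, on which `L` is bounded, say by `M`, and it acts
transitively on spheres about `0`. Hence `L h ≤ L g + 2 M` whenever `‖h 0‖ = ‖g 0‖`; in particular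
a translation by a vector of norm `‖g 0‖` costs at most `L g + 2 M`. In dimension at least two
every vector of norm at most `2 ‖g 0‖` is a sum of two vectors of norm `‖g 0‖`, so
`L h ≤ 2 L g + 5 M` whenever `‖h 0‖ ≤ 2 ‖g 0‖`. If `L` is not proper, there are `g` with `L g ≤ c`
and `‖g 0‖` arbitrarily large, and then `L ≤ 2 c + 5 M` everywhere.
-/

open Module Submodule RealInnerProductSpace

theorem exists_isometryEquiv_apply_zero_eq_zero_apply_eq {E : Type*} [NormedAddCommGroup E]
    [InnerProductSpace ℝ E] {a b : E} (hab : ‖a‖ = ‖b‖) :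
    ∃ k : E ≃ᵢ E, k 0 = 0 ∧ k a = b :=
  ⟨(reflection (ℝ ∙ (a - b))ᗮ).toIsometryEquiv, map_zero (Submodule.reflection _),
    reflection_sub hab⟩

section FiniteDimensional

variable {E : Type*} [NormedAddCommGroup E] [InnerProductSpace ℝ E] [FiniteDimensional ℝ E]

theorem exists_norm_eq_one_inner_eq_zero (hE : 2 ≤ finrank ℝ E) (v : E) :
    ∃ w : E, ‖w‖ = 1 ∧ ⟪v, w⟫ = 0 := by
  have hspan : finrank ℝ (ℝ ∙ v) ≤ 1 := by
    simpa using finrank_span_le_card (R := ℝ) ({v} : Set E)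
  have hperp : (ℝ ∙ v)ᗮ ≠ ⊥ := by
    intro hbot
    have := finrank_add_finrank_orthogonal (ℝ ∙ v)
    rw [hbot, finrank_bot] at this
    omega
  obtain ⟨w, hw, hw0⟩ := exists_mem_ne_zero_of_ne_bot hperp
  refine ⟨‖w‖⁻¹ • w, norm_smul_inv_norm hw0, ?_⟩
  rw [inner_smul_right, mem_orthogonal_singleton_iff_inner_right.mp hw, mul_zero]

/-- The witness is `v / 2 + t w` with `w` a unit vector orthogonal to `v`, which exists in
dimension at least two. -/
theorem exists_norm_eq_norm_sub_eq (hE : 2 ≤ finrank ℝ E) {v : E} {s : ℝ}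
    (hvs : ‖v‖ ≤ 2 * s) : ∃ x : E, ‖x‖ = s ∧ ‖v - x‖ = s := by
  obtain ⟨w, hw, hvw⟩ := exists_norm_eq_one_inner_eq_zero hE v
  have hsq : 0 ≤ s ^ 2 - ‖v‖ ^ 2 / 4 := by nlinarith [norm_nonneg v]
  set t := √(s ^ 2 - ‖v‖ ^ 2 / 4)
  have hnorm : ∀ t' : ℝ, t' ^ 2 = t ^ 2 → ‖(1 / 2 : ℝ) • v + t' • w‖ = s := by
    intro t' ht'
    have horth : ⟪(1 / 2 : ℝ) • v, t' • w⟫ = 0 := by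
      rw [inner_smul_left, inner_smul_right, hvw]; simp
    rw [← sq_eq_sq₀ (norm_nonneg _) (by linarith [norm_nonneg v]),
      norm_add_sq_real, horth, norm_smul, norm_smul, hw, mul_pow, mul_pow,
      Real.norm_eq_abs, Real.norm_eq_abs, sq_abs, sq_abs, ht', Real.sq_sqrt hsq]
    ring
  refine ⟨(1 / 2 : ℝ) • v + t • w, hnorm t rfl, ?_⟩
  rw [show v - ((1 / 2 : ℝ) • v + t • w) = (1 / 2 : ℝ) • v + (-t) • w by module]
  exact hnorm (-t) (neg_sq t)

end FiniteDimensional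

section Subadditive

variable {X : Type*} [PseudoEMetricSpace X] {L : (X ≃ᵢ X) → ℝ} {M : ℝ} {x₀ : X}

theorem le_add_of_apply_eq (hsub : ∀ g h, L (g * h) ≤ L g + L h)
    (hM : ∀ k : X ≃ᵢ X, k x₀ = x₀ → L k ≤ M) {w h : X ≃ᵢ X} (hwh : w x₀ = h x₀) :
    L h ≤ L w + M := by
  have hfix : (w⁻¹ * h) x₀ = x₀ := by
    rw [IsometryEquiv.mul_apply, ← hwh]
    exact w.symm_apply_apply x₀
  calc L h = L (w * (w⁻¹ * h)) := by rw [mul_inv_cancel_left]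
    _ ≤ L w + M := (hsub _ _).trans (add_le_add_right (hM _ hfix) _)

end Subadditive

section Euclidean

variable {E : Type*} [NormedAddCommGroup E] [InnerProductSpace ℝ E] {L : (E ≃ᵢ E) → ℝ} {M : ℝ}

theorem le_of_norm_apply_zero_eq (hsub : ∀ g h, L (g * h) ≤ L g + L h)
    (hM : ∀ k : E ≃ᵢ E, k 0 = 0 → L k ≤ M) {g h : E ≃ᵢ E} (hgh : ‖g 0‖ = ‖h 0‖) :
    L h ≤ L g + 2 * M := by
  obtain ⟨k, hk0, hkg⟩ := exists_isometryEquiv_apply_zero_eq_zero_apply_eq hgh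
  calc L h ≤ L (k * g) + M := le_add_of_apply_eq hsub hM hkg
    _ ≤ L k + L g + M := add_le_add_left (hsub k g) M
    _ ≤ L g + 2 * M := by linarith [hM k hk0]

theorem le_of_norm_apply_zero_le [FiniteDimensional ℝ E] (hE : 2 ≤ finrank ℝ E)
    (hsub : ∀ g h, L (g * h) ≤ L g + L h) (hM : ∀ k : E ≃ᵢ E, k 0 = 0 → L k ≤ M)
    {g h : E ≃ᵢ E} (hgh : ‖h 0‖ ≤ 2 * ‖g 0‖) : L h ≤ 2 * L g + 5 * M := by
  obtain ⟨x, hx, hhx⟩ := exists_norm_eq_norm_sub_eq hE hgh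
  have htrans : ∀ y : E, ‖y‖ = ‖g 0‖ → L (IsometryEquiv.addLeft y) ≤ L g + 2 * M := fun y hy =>
    le_of_norm_apply_zero_eq hsub hM (by simpa using hy.symm)
  have hprod : (IsometryEquiv.addLeft x * IsometryEquiv.addLeft (h 0 - x)) 0 = h 0 := by simp
  calc L h ≤ L (IsometryEquiv.addLeft x * IsometryEquiv.addLeft (h 0 - x)) + M :=
        le_add_of_apply_eq hsub hM hprod
    _ ≤ 2 * L g + 5 * M := by
        linarith [hsub (IsometryEquiv.addLeft x) (IsometryEquiv.addLeft (h 0 - x)),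
          htrans x hx, htrans _ hhx]

end Euclidean

theorem stmt_8_general (n : ℕ) (hn : 2 ≤ n)
    (L : (EuclideanSpace ℝ (Fin n) ≃ᵢ EuclideanSpace ℝ (Fin n)) → ℝ)
    (hsub : ∀ g h, L (g * h) ≤ L g + L h)
    (hloc : ∀ r : ℝ, 0 < r → ∃ M : ℝ, ∀ g, ‖g 0‖ ≤ r → L g ≤ M) :
    (∃ M : ℝ, ∀ g, L g ≤ M) ∨
      ∀ c : ℝ, ∃ r : ℝ, ∀ g, L g ≤ c → ‖g 0‖ ≤ r := by
  obtain ⟨M, hM⟩ := hloc 1 one_pos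
  have hstab : ∀ k, k 0 = 0 → L k ≤ M := fun k hk => hM k (by simp [hk])
  have hE : 2 ≤ finrank ℝ (EuclideanSpace ℝ (Fin n)) := by rwa [finrank_euclideanSpace_fin]
  refine or_iff_not_imp_right.mpr fun hnot => ?_
  push Not at hnot
  obtain ⟨c, hc⟩ := hnot
  refine ⟨2 * c + 5 * M, fun h => ?_⟩
  obtain ⟨g, hgc, hg⟩ := hc (‖h 0‖ / 2)
  calc L h ≤ 2 * L g + 5 * M := le_of_norm_apply_zero_le hE hsub hstab (by linarith)
    _ ≤ 2 * c + 5 * M := by linarith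

/-- any subadditive, locally bounded function on the group of surjective
isometries of Euclidean `ℝⁿ` (`n ≥ 2`) is either bounded or proper. -/
theorem stmt_8 (n : ℕ) (hn : 2 ≤ n)
    (L : (EuclideanSpace ℝ (Fin n) ≃ᵢ EuclideanSpace ℝ (Fin n)) → ℝ)
    (hnonneg : ∀ g, 0 ≤ L g)
    (hsub : ∀ g h, L (g * h) ≤ L g + L h)
    (hloc : ∀ r : ℝ, 0 < r → ∃ M : ℝ, ∀ g, ‖g 0‖ ≤ r → L g ≤ M) :
    (∃ M : ℝ, ∀ g, L g ≤ M) ∨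
      ∀ c : ℝ, ∃ r : ℝ, ∀ g, L g ≤ c → ‖g 0‖ ≤ r :=
  stmt_8_general n hn L hsub hloc
end

section
/- Let G be the subgroup of GL(2, ℝ) consisting of matrices of the form [[a, b], [0, 1]] with a ∈ ℝ, a ≠ 0, b ∈ ℝ (the affine group of the real line), with its topology as a subgroup of GL(2, ℝ). Let D ≤ G be the subgroup of matrices [[a, 0], [0, 1]] (a ≠ 0) and U ≤ G the subgroup of matrices [[1, b], [0, 1]]. Let L be a length on G. If L is not proper on D, i.e. there exists n such that {d ∈ D : L(d) ≤ n} does not have compact closure, then L is bounded on U. -/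
open scoped NNReal Topology

/-- The affine group of the real line, realized as the subgroup of `GL(2, ℝ)`
consisting of the matrices `[[a, b], [0, 1]]` (with `a ≠ 0` automatic from
invertibility). -/
def affineGroupR : Subgroup (GL (Fin 2) ℝ) where
  carrier := {g | (g : Matrix (Fin 2) (Fin 2) ℝ) 1 0 = 0 ∧
    (g : Matrix (Fin 2) (Fin 2) ℝ) 1 1 = 1}
  one_mem' := by
    constructor <;> simp [Matrix.one_apply]
  mul_mem' := by
    rintro a b ⟨ha0, ha1⟩ ⟨hb0, hb1⟩
    constructor <;>
      simp [Units.val_mul, Matrix.mul_apply, Fin.sum_univ_two, ha0, ha1, hb0, hb1]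
  inv_mem' := by
    rintro g ⟨h0, h1⟩
    have hmul : ((g : Matrix (Fin 2) (Fin 2) ℝ) *
        ((g⁻¹ : GL (Fin 2) ℝ) : Matrix (Fin 2) (Fin 2) ℝ)) = 1 := by
      rw [← Units.val_mul, mul_inv_cancel, Units.val_one]
    constructor
    · have := congrFun (congrFun hmul 1) 0
      simpa [Matrix.mul_apply, Fin.sum_univ_two, h0, h1, Matrix.one_apply] using this
    · have := congrFun (congrFun hmul 1) 1
      simpa [Matrix.mul_apply, Fin.sum_univ_two, h0, h1, Matrix.one_apply] using this

/-!
Write `d(a) = [[a, 0], [0, 1]]` and `u(b) = [[1, b], [0, 1]]`, so that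
`d(a)⁻¹ u(b) d(a) = u(b / a)`. By symmetry of `L`, a sublevel set `{a | L (d a) ≤ c}` is closed
under `a ↦ a⁻¹`; if it were bounded in `|a|` it would lie in a compact annulus. So
non-properness on `D` provides `d(a)` with `L (d a) ≤ c` and `|a|` arbitrarily large.
Conjugating `u(b)` by such a `d(a)` with `|a| ≥ |b|` lands in the compact set `u([-1, 1])`,
on which `L` is bounded by some `M`, and subadditivity gives `L (u b) ≤ 2c + M`.
-/

theorem Units.isCompact_setOf_norm_le_and_norm_inv_le {𝕜 : Type*} [NormedField 𝕜]
    [ProperSpace 𝕜] (R : ℝ) :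
    IsCompact {a : 𝕜ˣ | ‖(a : 𝕜)‖ ≤ R ∧ ‖((a⁻¹ : 𝕜ˣ) : 𝕜)‖ ≤ R} := by
  have hball := isCompact_closedBall (0 : 𝕜) R
  have hball_op : IsCompact (MulOpposite.unop ⁻¹' Metric.closedBall (0 : 𝕜) R) :=
    MulOpposite.opHomeomorph.isCompact_preimage.mp hball
  convert isClosedEmbedding_embedProduct.isCompact_preimage (hball.prod hball_op) using 1
  ext a
  simp

theorem IsLength.exists_le_of_forall_exists_conj_mem {G : Type*} [Group G] [TopologicalSpace G]
    {L : G → ℝ} (hL : IsLength L) {K : Set G} (hK : IsCompact K) (c : ℝ) {U : Set G}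
    (hU : ∀ u ∈ U, ∃ s, L s ≤ c ∧ s⁻¹ * u * s ∈ K) :
    ∃ M, ∀ u ∈ U, L u ≤ M := by
  obtain ⟨M, hM⟩ := hL.1.2.1 K hK
  refine ⟨c + M + c, fun u hu => ?_⟩
  obtain ⟨s, hs, hsK⟩ := hU u hu
  have hmul := hL.1.2.2
  calc L u = L (s * (s⁻¹ * u * s) * s⁻¹) := by group
    _ ≤ L s + L (s⁻¹ * u * s) + L s⁻¹ := (hmul _ _).trans (by gcongr; exact hmul _ _)
    _ ≤ c + M + c := by gcongr; exacts [hM _ hsK, (hL.2 s).ge.trans hs]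

namespace affineGroupR

open Matrix Matrix.GeneralLinearGroup

def diagMatrixHom : ℝ →* Matrix (Fin 2) (Fin 2) ℝ where
  toFun a := !![a, 0; 0, 1]
  map_one' := one_fin_two.symm
  map_mul' a b := by simp

noncomputable def diag : ℝˣ →* affineGroupR :=
  (Units.map diagMatrixHom).codRestrict affineGroupR fun a => by
    constructor <;> simp [diagMatrixHom]

def unip (b : ℝ) : affineGroupR :=
  ⟨upperRightHom b, by constructor <;> simp⟩

lemma coe_diag (a : ℝˣ) :
    ((diag a : GL (Fin 2) ℝ) : Matrix (Fin 2) (Fin 2) ℝ) = !![(a : ℝ), 0; 0, 1] := rfl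

lemma coe_unip (b : ℝ) :
    ((unip b : GL (Fin 2) ℝ) : Matrix (Fin 2) (Fin 2) ℝ) = !![1, b; 0, 1] := rfl

lemma ext_coe {g h : affineGroupR}
    (H : ((g : GL (Fin 2) ℝ) : Matrix (Fin 2) (Fin 2) ℝ) =
      ((h : GL (Fin 2) ℝ) : Matrix (Fin 2) (Fin 2) ℝ)) :
    g = h :=
  Subtype.ext (Units.ext H)

lemma continuous_diag : Continuous diag := by
  refine Continuous.subtype_mk (Units.continuous_map ?_) _
  refine continuous_matrix fun i j => ?_
  fin_cases i <;> fin_cases j <;> simp [diagMatrixHom] <;> fun_prop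

lemma continuous_unip : Continuous unip :=
  continuous_upperRightHom.subtype_mk _

lemma apply_zero_zero_ne_zero (g : affineGroupR) : (g : GL (Fin 2) ℝ) 0 0 ≠ 0 := by
  have := det_ne_zero (g : GL (Fin 2) ℝ)
  rwa [det_fin_two, g.2.1, g.2.2, mul_zero, sub_zero, mul_one] at this

lemma exists_eq_diag_of_apply_zero_one {g : affineGroupR} (h : (g : GL (Fin 2) ℝ) 0 1 = 0) :
    ∃ a, g = diag a := by
  refine ⟨Units.mk0 _ (apply_zero_zero_ne_zero g), ext_coe (ext fun i j => ?_)⟩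
  fin_cases i <;> fin_cases j <;> simp [coe_diag, h, g.2.1, g.2.2]

lemma exists_eq_unip_of_apply_zero_zero {g : affineGroupR} (h : (g : GL (Fin 2) ℝ) 0 0 = 1) :
    ∃ b, g = unip b := by
  refine ⟨(g : GL (Fin 2) ℝ) 0 1, ext_coe (ext fun i j => ?_)⟩
  fin_cases i <;> fin_cases j <;> simp [coe_unip, h, g.2.1, g.2.2]

lemma diag_inv_mul_unip_mul_diag (a : ℝˣ) (b : ℝ) :
    (diag a)⁻¹ * unip b * diag a = unip ((a : ℝ)⁻¹ * b) := by
  refine ext_coe ?_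
  simp only [← map_inv, Subgroup.coe_mul, Units.val_mul, coe_diag, coe_unip,
    Units.val_inv_eq_inv_val, mul_fin_two]
  simp

lemma exists_le_norm_of_not_isCompact {L : affineGroupR → ℝ} (hL : ∀ g, L g = L g⁻¹) {c : ℝ}
    (hc : ¬ IsCompact (closure {g : affineGroupR | (g : GL (Fin 2) ℝ) 0 1 = 0 ∧ L g ≤ c}))
    (R : ℝ) : ∃ a : ℝˣ, L (diag a) ≤ c ∧ R ≤ ‖(a : ℝ)‖ := by
  by_contra! h
  have hK := (Units.isCompact_setOf_norm_le_and_norm_inv_le R).image continuous_diag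
  refine hc (hK.closure_of_subset ?_)
  rintro g ⟨hg, hgc⟩
  obtain ⟨a, rfl⟩ := exists_eq_diag_of_apply_zero_one hg
  refine ⟨a, ⟨(h a hgc).le, (h a⁻¹ ?_).le⟩, rfl⟩
  rwa [map_inv, ← hL]

end affineGroupR

/-- if a length on the affine group of the real line is not proper on
the diagonal subgroup `D` (matrices `[[a,0],[0,1]]`), then it is bounded on the
unipotent subgroup `U` (matrices `[[1,b],[0,1]]`). -/
theorem stmt_12 (L : affineGroupR → ℝ) (hL : IsLength L)
    (hnp : ∃ c : ℝ, ¬ IsCompact (closure {g : affineGroupR |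
      ((g : GL (Fin 2) ℝ) : Matrix (Fin 2) (Fin 2) ℝ) 0 1 = 0 ∧ L g ≤ c})) :
    ∃ M : ℝ, ∀ g : affineGroupR,
      ((g : GL (Fin 2) ℝ) : Matrix (Fin 2) (Fin 2) ℝ) 0 0 = 1 → L g ≤ M := by
  obtain ⟨c, hc⟩ := hnp
  refine hL.exists_le_of_forall_exists_conj_mem (U := {g | (g : GL (Fin 2) ℝ) 0 0 = 1})
    ((isCompact_closedBall (0 : ℝ) 1).image affineGroupR.continuous_unip) c fun g hg => ?_
  obtain ⟨b, rfl⟩ := affineGroupR.exists_eq_unip_of_apply_zero_zero hg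
  obtain ⟨a, hac, hba⟩ := affineGroupR.exists_le_norm_of_not_isCompact hL.2 hc ‖b‖
  refine ⟨affineGroupR.diag a, hac, (a : ℝ)⁻¹ * b, ?_,
    (affineGroupR.diag_inv_mul_unip_mul_diag a b).symm⟩
  rw [mem_closedBall_zero_iff, norm_mul, norm_inv]
  exact inv_mul_le_one_of_le₀ hba (norm_nonneg _)
end

section
/- Let n ≥ 2, let H = SL(n, ℝ) with its usual topology, and let A be a locally compact group. Let L be a semigroup length on the product group H × A. If the restriction of L to H × {1} is proper and the restriction of L to {1} × A is proper, then L is proper on H × A. -/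
open scoped NNReal Topology

/-- The topology on `SL(n, ℝ)` induced from the space of `n × n` real matrices. -/
instance sltop (n : ℕ) (K : Type*) [CommRing K] [TopologicalSpace K] :
    TopologicalSpace (Matrix.SpecialLinearGroup (Fin n) K) :=
  instTopologicalSpaceSubtype

/-!
Write `h ∈ SL(n, ℝ)` as `h = U D V` with `U, V` orthogonal and `D` positive diagonal of
determinant one. For a signed cyclic permutation matrix `Γ` one has `(D Γ)ⁿ = Γⁿ`, so
`u = V⁻¹ Γ U⁻¹` is bounded with `(h u)ⁿ` bounded; expanding `((h, a) (u, 1))ⁿ = ((h u)ⁿ, aⁿ)`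
bounds `L (1, aⁿ)` by `n L (h, a)` plus a constant, so `aⁿ` ranges over a compact set.
With the bounded element `x = V⁻¹ U⁻¹` one has `(h x)ⁿ = U Dⁿ U⁻¹`, of operator norm `‖h‖ⁿ`,
and `((h, a) (x, 1))ⁿ (1, a⁻ⁿ) = ((h x)ⁿ, 1)` then bounds `‖h‖`.
Finally `(1, a) = (h⁻¹, 1) (h, a)` bounds `L (1, a)`.
-/

open Matrix
open scoped Matrix.Norms.L2Operator

namespace IsSemigroupLength

theorem map_pow_le {G : Type*} [Group G] [TopologicalSpace G] {L : G → ℝ}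
    (hL : IsSemigroupLength L) (x : G) {k : ℕ} (hk : k ≠ 0) : L (x ^ k) ≤ k * L x := by
  induction k with
  | zero => exact absurd rfl hk
  | succ k ih =>
    rcases eq_or_ne k 0 with rfl | hk₀
    · simp
    · calc L (x ^ (k + 1)) ≤ L (x ^ k) + L x := pow_succ x k ▸ hL.2.2 _ _
        _ ≤ k * L x + L x := by gcongr; exact ih hk₀
        _ = (k + 1 : ℕ) * L x := by push_cast; ring

section Prod

variable {H A : Type*} [Group H] [TopologicalSpace H] [Group A] [TopologicalSpace A]
  {L : H × A → ℝ}

theorem exists_forall_fst_le (hL : IsSemigroupLength L) {K : Set H} (hK : IsCompact K) :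
    ∃ M, ∀ h ∈ K, L (h, 1) ≤ M := by
  obtain ⟨M, hM⟩ := hL.2.1 _ (hK.prod isCompact_singleton)
  exact ⟨M, fun h hh => hM _ ⟨hh, rfl⟩⟩

theorem exists_forall_snd_le (hL : IsSemigroupLength L) {S : Set A} (hS : IsCompact S) :
    ∃ M, ∀ a ∈ S, L (1, a) ≤ M := by
  obtain ⟨M, hM⟩ := hL.2.1 _ (isCompact_singleton.prod hS)
  exact ⟨M, fun a ha => hM _ ⟨rfl, ha⟩⟩

variable [IsTopologicalGroup H] {n : ℕ} {K : Set H}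

theorem exists_forall_snd_pow_le (hL : IsSemigroupLength L) (hn : n ≠ 0) (hK : IsCompact K)
    (hK_pow : ∀ h, ∃ u ∈ K, (h * u) ^ n ∈ K) (c : ℝ) :
    ∃ C, ∀ h a, L (h, a) ≤ c → L (1, a ^ n) ≤ C := by
  obtain ⟨M, hM⟩ := hL.exists_forall_fst_le (hK.union hK.inv)
  refine ⟨M + n * (c + M), fun h a hha => ?_⟩
  obtain ⟨u, hu, hhu⟩ := hK_pow h
  have hword : ((1 : H), a ^ n) = (((h * u) ^ n)⁻¹, 1) * ((h, a) * (u, 1)) ^ n := by simp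
  calc L (1, a ^ n) ≤ L (((h * u) ^ n)⁻¹, 1) + L (((h, a) * (u, 1)) ^ n) :=
        hword ▸ hL.2.2 _ _
    _ ≤ M + n * (L (h, a) + L (u, 1)) := by
        gcongr
        · exact hM _ (Or.inr (Set.inv_mem_inv.2 hhu))
        · exact (hL.map_pow_le _ hn).trans (by gcongr; exact hL.2.2 _ _)
    _ ≤ M + n * (c + M) := by gcongr; exact hM _ (Or.inl hu)

variable [IsTopologicalGroup A]

theorem exists_isCompact_forall_fst_mem (hL : IsSemigroupLength L)
    (hH : ∀ c : ℝ, IsCompact (closure {h : H | L (h, 1) ≤ c}))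
    (hA : ∀ c : ℝ, IsCompact (closure {a : A | L (1, a) ≤ c}))
    (hn : n ≠ 0) (hK : IsCompact K) (hK_pow : ∀ h, ∃ u ∈ K, (h * u) ^ n ∈ K)
    (hK_proper : ∀ T, IsCompact T → ∃ T', IsCompact T' ∧ ∀ h, ∃ x ∈ K, (h * x) ^ n ∈ T → h ∈ T')
    (c : ℝ) : ∃ T', IsCompact T' ∧ ∀ h a, L (h, a) ≤ c → h ∈ T' := by
  obtain ⟨C, hC⟩ := hL.exists_forall_snd_pow_le hn hK hK_pow c
  obtain ⟨M₁, hM₁⟩ := hL.exists_forall_snd_le (hA C).inv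
  obtain ⟨M, hM⟩ := hL.exists_forall_fst_le hK
  obtain ⟨T', hT', hT'_mem⟩ := hK_proper _ (hH (n * (c + M) + M₁))
  refine ⟨T', hT', fun h a hha => ?_⟩
  obtain ⟨x, hx, hhx⟩ := hT'_mem h
  refine hhx (subset_closure ?_)
  have hword : ((h * x) ^ n, (1 : A)) = ((h, a) * (x, 1)) ^ n * (1, (a ^ n)⁻¹) := by simp
  calc L ((h * x) ^ n, 1) ≤ L (((h, a) * (x, 1)) ^ n) + L (1, (a ^ n)⁻¹) := hword ▸ hL.2.2 _ _
    _ ≤ n * (L (h, a) + L (x, 1)) + M₁ := by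
        gcongr
        · exact (hL.map_pow_le _ hn).trans (by gcongr; exact hL.2.2 _ _)
        · exact hM₁ _ (Set.inv_mem_inv.2 (subset_closure (hC h a hha)))
    _ ≤ n * (c + M) + M₁ := by gcongr; exact hM _ hx

theorem isProperLength_prod (hL : IsSemigroupLength L)
    (hH : ∀ c : ℝ, IsCompact (closure {h : H | L (h, 1) ≤ c}))
    (hA : ∀ c : ℝ, IsCompact (closure {a : A | L (1, a) ≤ c}))
    (hn : n ≠ 0) (hK : IsCompact K) (hK_pow : ∀ h, ∃ u ∈ K, (h * u) ^ n ∈ K)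
    (hK_proper : ∀ T, IsCompact T → ∃ T', IsCompact T' ∧ ∀ h, ∃ x ∈ K, (h * x) ^ n ∈ T → h ∈ T') :
    IsProperLength L := by
  intro c
  obtain ⟨T, hT, hT_mem⟩ := hL.exists_isCompact_forall_fst_mem hH hA hn hK hK_pow hK_proper c
  obtain ⟨M, hM⟩ := hL.exists_forall_fst_le hT.inv
  have hsub : {p : H × A | L p ≤ c} ⊆ T ×ˢ {a | L (1, a) ≤ M + c} := by
    rintro ⟨h, a⟩ hha
    have hh := hT_mem h a hha
    refine ⟨hh, ?_⟩
    calc L (1, a) = L ((h⁻¹, 1) * (h, a)) := by simp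
      _ ≤ M + c := (hL.2.2 _ _).trans (add_le_add (hM _ (Set.inv_mem_inv.2 hh)) hha)
  refine (hT.closure.prod (hA (M + c))).of_isClosed_subset isClosed_closure ?_
  exact (closure_mono hsub).trans closure_prod_eq.subset

end Prod

end IsSemigroupLength

theorem Unitary.conj_pow {R : Type*} [Monoid R] [StarMul R] {U : R} (hU : U ∈ unitary R) (x : R)
    (k : ℕ) : (U * x * star U) ^ k = U * x ^ k * star U :=
  Units.conj_pow (Unitary.toUnits ⟨U, hU⟩) x k

theorem Pi.norm_pow {ι 𝕜 : Type*} [Fintype ι] [NormedDivisionRing 𝕜] (v : ι → 𝕜) {k : ℕ}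
    (hk : k ≠ 0) : ‖v ^ k‖ = ‖v‖ ^ k := by
  suffices ‖v ^ k‖₊ = ‖v‖₊ ^ k by rw [← coe_nnnorm, ← coe_nnnorm, this, NNReal.coe_pow]
  rw [Pi.nnnorm_def, Pi.nnnorm_def,
    Finset.apply_sup_eq_sup_comp (· ^ k) (pow_left_mono k).map_sup (zero_pow hk)]
  simp [Function.comp_def]

open Fin.NatCast Fin.CommRing in
theorem finRotate_pow_apply {n : ℕ} [NeZero n] (k : ℕ) (i : Fin n) :
    (finRotate n ^ k) i = i + (k : Fin n) := by
  induction k with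
  | zero => simp
  | succ k ih => rw [pow_succ', Equiv.Perm.mul_apply, ih, finRotate_apply]; push_cast; ring

theorem finRotate_pow_self (n : ℕ) : finRotate n ^ n = 1 := by
  obtain rfl | _ := eq_zero_or_neZero n
  · rfl
  · ext i; simp [finRotate_pow_apply]

namespace Matrix

theorem exists_eq_unitary_mul_diagonal_mul_unitary {ι : Type*} [Fintype ι] [DecidableEq ι]
    {M : Matrix ι ι ℝ} (hM : M.det ≠ 0) :
    ∃ U ∈ unitaryGroup ι ℝ, ∃ V ∈ unitaryGroup ι ℝ, ∃ v : ι → ℝ,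
      (∀ i, 0 < v i) ∧ M = U * diagonal v * V := by
  have hpos : (Mᴴ * M).PosDef := .conjTranspose_mul_self M
    (mulVec_injective_iff_isUnit.2 ((isUnit_iff_isUnit_det M).2 hM.isUnit))
  set W : Matrix ι ι ℝ := (hpos.isHermitian.eigenvectorUnitary : Matrix ι ι ℝ)
  have hW : W ∈ unitaryGroup ι ℝ := hpos.isHermitian.eigenvectorUnitary.2
  set μ := hpos.isHermitian.eigenvalues
  have hWμ : star W * (Mᴴ * M) * W = diagonal μ := by
    have hspec : Mᴴ * M = W * diagonal μ * star W := hpos.isHermitian.spectral_theorem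
    rw [hspec]
    simp only [mul_assoc, Unitary.star_mul_self_of_mem hW, mul_one]
    rw [← mul_assoc, Unitary.star_mul_self_of_mem hW, one_mul]
  set v : ι → ℝ := fun i => √(μ i)
  have hv : ∀ i, 0 < v i := fun i => Real.sqrt_pos.2 (hpos.eigenvalues_pos i)
  have hvv : diagonal v⁻¹ * diagonal v = 1 := by
    rw [diagonal_mul_diagonal, ← diagonal_one]
    exact congrArg diagonal (funext fun i => inv_mul_cancel₀ (hv i).ne')
  have hvμv : diagonal v⁻¹ * diagonal μ * diagonal v⁻¹ = 1 := by
    rw [diagonal_mul_diagonal, diagonal_mul_diagonal, ← diagonal_one]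
    refine congrArg diagonal (funext fun i => ?_)
    have hμ : μ i = v i ^ 2 := (Real.sq_sqrt (hpos.eigenvalues_pos i).le).symm
    simp only [Pi.inv_apply, hμ]
    field_simp [(hv i).ne']
  refine ⟨M * W * diagonal v⁻¹, ?_, star W, Unitary.star_mem hW, v, hv, ?_⟩
  · rw [mem_unitaryGroup_iff', ← hvμv, ← hWμ]
    simp only [star_mul, star_eq_conjTranspose, diagonal_conjTranspose, star_trivial, mul_assoc]
  · calc M = M * W * (diagonal v⁻¹ * diagonal v) * star W := by
          rw [hvv, mul_one, mul_assoc, Unitary.mul_star_self_of_mem hW, mul_one]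
      _ = _ := by simp only [mul_assoc]

section Permutation

variable {ι R : Type*} [Fintype ι] [DecidableEq ι] [CommSemiring R]

theorem permMatrix_mul_diagonal (σ : Equiv.Perm ι) (w : ι → R) :
    σ.permMatrix R * diagonal w = diagonal (w ∘ σ) * σ.permMatrix R := by
  ext i j
  by_cases h : σ i = j <;> simp [PEquiv.toMatrix_apply, h]

theorem diagonal_mul_permMatrix_pow (σ : Equiv.Perm ι) (v : ι → R) (k : ℕ) :
    (diagonal v * σ.permMatrix R) ^ k
      = diagonal (fun i => ∏ j ∈ Finset.range k, v ((σ ^ j) i)) * (σ ^ k).permMatrix R := by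
  induction k with
  | zero => simp
  | succ k ih =>
    rw [pow_succ', ih, mul_assoc, ← mul_assoc (σ.permMatrix R), permMatrix_mul_diagonal,
      mul_assoc, ← permMatrix_mul, ← pow_succ, ← mul_assoc, diagonal_mul_diagonal]
    congr 2
    funext i
    rw [Finset.prod_range_succ']
    simp [pow_succ, mul_comm]

open Fin.NatCast in
theorem diagonal_mul_permMatrix_finRotate_pow_self {n : ℕ} (v : Fin n → R) :
    (diagonal v * (finRotate n).permMatrix R) ^ n = (∏ i, v i) • 1 := by
  obtain rfl | _ := eq_zero_or_neZero n
  · simp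
  rw [diagonal_mul_permMatrix_pow, finRotate_pow_self, permMatrix_one, mul_one, ← diagonal_one,
    ← diagonal_smul]
  refine congrArg diagonal (funext fun i => ?_)
  simp only [finRotate_pow_apply, Pi.smul_apply, smul_eq_mul, mul_one]
  rw [← Fin.prod_univ_eq_prod_range (fun j => v (i + j))]
  simpa using Equiv.prod_comp (Equiv.addLeft i) v

end Permutation

section SignedRotation

variable (R : Type*) [CommRing R] (n : ℕ) [NeZero n]

def signedRotation : Matrix (Fin n) (Fin n) R :=
  diagonal (Function.update 1 0 (Equiv.Perm.sign (finRotate n) : R)) * (finRotate n).permMatrix R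

theorem det_signedRotation : (signedRotation R n).det = 1 := by
  rw [signedRotation, det_mul, det_diagonal, det_permutation,
    Finset.prod_update_of_mem (Finset.mem_univ _)]
  simp only [Pi.one_apply, Finset.prod_const_one, mul_one]
  rcases Int.units_eq_one_or (Equiv.Perm.sign (finRotate n)) with h | h <;> simp [h]

variable {R n}

theorem diagonal_mul_signedRotation_pow (v : Fin n → R) :
    (diagonal v * signedRotation R n) ^ n = (∏ i, v i) • signedRotation R n ^ n := by
  rw [signedRotation, ← mul_assoc, diagonal_mul_diagonal,
    diagonal_mul_permMatrix_finRotate_pow_self, diagonal_mul_permMatrix_finRotate_pow_self,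
    Finset.prod_mul_distrib, mul_smul]

theorem signedRotation_l2_opNorm_le {𝕜 : Type*} [RCLike 𝕜] : ‖signedRotation 𝕜 n‖ ≤ 1 := by
  refine (norm_mul_le _ _).trans (mul_le_one₀ ?_ (norm_nonneg _) (permMatrix_l2_opNorm_le _))
  rw [l2_opNorm_diagonal, pi_norm_le_iff_of_nonneg zero_le_one]
  intro i
  rcases eq_or_ne i 0 with rfl | hi
  · rcases Int.units_eq_one_or (Equiv.Perm.sign (finRotate n)) with h | h <;> simp [h]
  · simp [hi]

end SignedRotation

namespace SpecialLinearGroup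

theorem exists_eq_unitary_mul_diagonal_mul_unitary {ι : Type*} [Fintype ι] [DecidableEq ι]
    (h : SpecialLinearGroup ι ℝ) :
    ∃ U ∈ unitaryGroup ι ℝ, ∃ V ∈ unitaryGroup ι ℝ, ∃ v : ι → ℝ, (∀ i, 0 < v i) ∧
      ∏ i, v i = 1 ∧ U.det * V.det = 1 ∧ (h : Matrix ι ι ℝ) = U * diagonal v * V := by
  obtain ⟨U, hU, V, hV, v, hv, hh⟩ :=
    Matrix.exists_eq_unitary_mul_diagonal_mul_unitary (h.2.symm ▸ one_ne_zero)
  have hdet : U.det * V.det * ∏ i, v i = 1 := by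
    rw [mul_right_comm, ← det_diagonal, ← det_mul, ← det_mul, ← hh, h.2]
  have hsq : (U.det * V.det) * (U.det * V.det) = 1 := by
    have hU' : U.det * U.det = 1 := by simpa using (det_of_mem_unitary hU).1
    have hV' : V.det * V.det = 1 := by simpa using (det_of_mem_unitary hV).1
    linear_combination V.det * V.det * hU' + hV'
  have hpos : 0 < U.det * V.det :=
    pos_of_mul_pos_left (hdet ▸ one_pos) (Finset.prod_pos fun i _ => hv i).le
  have hUV : U.det * V.det = 1 := by nlinarith
  refine ⟨U, hU, V, hV, v, hv, ?_, hUV, hh⟩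
  simpa [hUV] using hdet

/-- `sltop` is not reducibly the topology for which Mathlib provides `topologicalGroup`. -/
instance instIsTopologicalGroupFin (n : ℕ) (K : Type*) [CommRing K] [TopologicalSpace K]
    [IsTopologicalRing K] : IsTopologicalGroup (SpecialLinearGroup (Fin n) K) :=
  topologicalGroup

variable {n : ℕ}

theorem isCompact_setOf_norm_le (r : ℝ) :
    IsCompact {g : SpecialLinearGroup (Fin n) ℝ | ‖(g : Matrix (Fin n) (Fin n) ℝ)‖ ≤ r} := by
  rw [show {g : SpecialLinearGroup (Fin n) ℝ | ‖(g : Matrix (Fin n) (Fin n) ℝ)‖ ≤ r}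
    = ((↑) : SpecialLinearGroup (Fin n) ℝ → Matrix (Fin n) (Fin n) ℝ) ⁻¹' Metric.closedBall 0 r by
      ext; exact mem_closedBall_zero_iff.symm]
  exact isClosedEmbedding_val.isCompact_preimage (isCompact_closedBall _ r)

variable [NeZero n]

theorem exists_norm_le_one_norm_mul_pow_le_one (h : SpecialLinearGroup (Fin n) ℝ) :
    ∃ u : SpecialLinearGroup (Fin n) ℝ, ‖(u : Matrix (Fin n) (Fin n) ℝ)‖ ≤ 1 ∧
      ‖(↑((h * u) ^ n) : Matrix (Fin n) (Fin n) ℝ)‖ ≤ 1 := by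
  obtain ⟨U, hU, V, hV, v, -, hv, hUV, hh⟩ := h.exists_eq_unitary_mul_diagonal_mul_unitary
  let u : SpecialLinearGroup (Fin n) ℝ := ⟨star V * signedRotation ℝ n * star U, by
    simp only [det_mul, det_signedRotation, star_eq_conjTranspose, det_conjTranspose, star_trivial]
    linear_combination hUV⟩
  have hhu : ((h * u : SpecialLinearGroup (Fin n) ℝ) : Matrix (Fin n) (Fin n) ℝ)
      = U * (diagonal v * signedRotation ℝ n) * star U := by
    rw [coe_mul, hh]
    simp only [u, mul_assoc]
    rw [← mul_assoc V, Unitary.mul_star_self_of_mem hV, one_mul]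
  refine ⟨u, ?_, ?_⟩
  · simpa [u, CStarRing.norm_mem_unitary_mul _ (Unitary.star_mem hV),
      CStarRing.norm_mul_mem_unitary _ (Unitary.star_mem hU)] using signedRotation_l2_opNorm_le
  · rw [coe_pow, hhu, Unitary.conj_pow hU, CStarRing.norm_mul_mem_unitary _ (Unitary.star_mem hU),
      CStarRing.norm_mem_unitary_mul _ hU, diagonal_mul_signedRotation_pow, hv, one_smul]
    exact (norm_pow_le' _ (Nat.pos_of_neZero n)).trans
      (pow_le_one₀ (norm_nonneg _) signedRotation_l2_opNorm_le)

theorem exists_norm_le_one_norm_mul_pow_eq (h : SpecialLinearGroup (Fin n) ℝ) :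
    ∃ x : SpecialLinearGroup (Fin n) ℝ, ‖(x : Matrix (Fin n) (Fin n) ℝ)‖ ≤ 1 ∧
      ‖(↑((h * x) ^ n) : Matrix (Fin n) (Fin n) ℝ)‖ = ‖(h : Matrix (Fin n) (Fin n) ℝ)‖ ^ n := by
  obtain ⟨U, hU, V, hV, v, -, -, hUV, hh⟩ := h.exists_eq_unitary_mul_diagonal_mul_unitary
  let x : SpecialLinearGroup (Fin n) ℝ := ⟨star V * star U, by
    simp only [det_mul, star_eq_conjTranspose, det_conjTranspose, star_trivial]
    linear_combination hUV⟩
  have hhx : ((h * x : SpecialLinearGroup (Fin n) ℝ) : Matrix (Fin n) (Fin n) ℝ)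
      = U * diagonal v * star U := by
    rw [coe_mul, hh]
    simp only [x, mul_assoc]
    rw [← mul_assoc V, Unitary.mul_star_self_of_mem hV, one_mul]
  refine ⟨x, ?_, ?_⟩
  · simp [x, CStarRing.norm_mem_unitary_mul _ (Unitary.star_mem hV),
      CStarRing.norm_of_mem_unitary (Unitary.star_mem hU)]
  · rw [coe_pow, hhx, Unitary.conj_pow hU, CStarRing.norm_mul_mem_unitary _ (Unitary.star_mem hU),
      CStarRing.norm_mem_unitary_mul _ hU, hh, CStarRing.norm_mul_mem_unitary _ hV,
      CStarRing.norm_mem_unitary_mul _ hU, diagonal_pow, l2_opNorm_diagonal, l2_opNorm_diagonal,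
      Pi.norm_pow _ (NeZero.ne n)]

theorem exists_isCompact_of_mul_pow_mem {T : Set (SpecialLinearGroup (Fin n) ℝ)}
    (hT : IsCompact T) :
    ∃ T', IsCompact T' ∧ ∀ h, ∃ x ∈ {g : SpecialLinearGroup (Fin n) ℝ |
      ‖(g : Matrix (Fin n) (Fin n) ℝ)‖ ≤ 1}, (h * x) ^ n ∈ T → h ∈ T' := by
  obtain ⟨R, hR⟩ := hT.exists_bound_of_continuousOn
    (f := fun g => ‖(g : Matrix (Fin n) (Fin n) ℝ)‖) (by fun_prop)
  refine ⟨_, isCompact_setOf_norm_le (max 1 R), fun h => ?_⟩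
  obtain ⟨x, hx, hhx⟩ := h.exists_norm_le_one_norm_mul_pow_eq
  refine ⟨x, hx, fun hmem => ?_⟩
  have hpow : ‖(h : Matrix (Fin n) (Fin n) ℝ)‖ ^ n ≤ R :=
    hhx ▸ (le_abs_self _).trans (hR _ hmem)
  rcases le_or_gt ‖(h : Matrix (Fin n) (Fin n) ℝ)‖ 1 with h1 | h1
  · exact h1.trans (le_max_left _ _)
  · exact (le_self_pow₀ h1.le (NeZero.ne n)).trans (hpow.trans (le_max_right _ _))

end SpecialLinearGroup

end Matrix

theorem stmt_16_general (n : ℕ) (hn : 2 ≤ n) {A : Type*} [Group A] [TopologicalSpace A]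
    [IsTopologicalGroup A]
    (L : Matrix.SpecialLinearGroup (Fin n) ℝ × A → ℝ)
    (hL : IsSemigroupLength L)
    (hH : ∀ c : ℝ, IsCompact
      (closure {h : Matrix.SpecialLinearGroup (Fin n) ℝ | L (h, 1) ≤ c}))
    (hA : ∀ c : ℝ, IsCompact (closure {a : A | L (1, a) ≤ c})) :
    IsProperLength L := by
  have : NeZero n := ⟨by omega⟩
  exact hL.isProperLength_prod hH hA (NeZero.ne n) (SpecialLinearGroup.isCompact_setOf_norm_le 1)
    SpecialLinearGroup.exists_norm_le_one_norm_mul_pow_le_one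
    fun _ => SpecialLinearGroup.exists_isCompact_of_mul_pow_mem

/-- a semigroup length on `SL(n, ℝ) × A` (with `A` locally compact)
which is proper on `SL(n, ℝ) × {1}` and on `{1} × A` is proper. -/
theorem stmt_16 (n : ℕ) (hn : 2 ≤ n) {A : Type*} [Group A] [TopologicalSpace A]
    [IsTopologicalGroup A] [LocallyCompactSpace A]
    (L : Matrix.SpecialLinearGroup (Fin n) ℝ × A → ℝ)
    (hL : IsSemigroupLength L)
    (hH : ∀ c : ℝ, IsCompact
      (closure {h : Matrix.SpecialLinearGroup (Fin n) ℝ | L (h, 1) ≤ c}))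
    (hA : ∀ c : ℝ, IsCompact (closure {a : A | L (1, a) ≤ c})) :
    IsProperLength L :=
  stmt_16_general n hn L hL hH hA
end

section
/- Let n ≥ 2 and let (g_m) be a sequence in SL(n, ℝ) that is unbounded (does not lie in any compact subset of SL(n, ℝ)). Then there exist sequences (k_m), (k'_m) in SL(n, ℝ) lying in a compact subset, and an element u ∈ SL(n, ℝ), such that the sequence of commutators [k_m g_m k'_m, u] = (k_m g_m k'_m) u (k_m g_m k'_m)⁻¹ u⁻¹ is unbounded in SL(n, ℝ). -/
open scoped NNReal Topology

/-!
Write `h = g k'` and `u = 1 + E i₀ i₁`. Since `[h, u] u = 1 + h E i₀ i₁ h⁻¹`, a bounded commutator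
bounds the products `h x i₀ * h⁻¹ i₁ y`. Taking for `k'` a signed permutation matrix that moves
the largest off-diagonal product `|g x c| * |g⁻¹ r y|` (`c ≠ r`) into this position bounds every
off-diagonal product of `g`. As `g⁻¹ g = 1`, the diagonal products `|g x i| * |g⁻¹ i y|` factor
through off-diagonal ones, and then `det g⁻¹ = 1` together with `|det B| ≤ n! (max |B j y|)ⁿ`
bounds the entries of `g`: the sequence `(g m)` would lie in a compact set.
-/

open Equiv Matrix

theorem Equiv.Perm.exists_apply_eq_and_apply_eq {ι : Type*} [DecidableEq ι] {i₀ i₁ c r : ι}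
    (h : i₀ ≠ i₁) (h' : c ≠ r) : ∃ σ : Perm ι, σ i₀ = c ∧ σ i₁ = r := by
  have hr : i₀ ≠ swap i₀ c r := fun hr ↦ h' (by simpa using congrArg (swap i₀ c) hr)
  exact ⟨swap i₀ c * swap i₁ (swap i₀ c r), by simp [swap_apply_of_ne_of_ne h hr], by simp⟩

namespace Matrix

variable {ι R : Type*} [Fintype ι] [DecidableEq ι] [CommRing R]

theorem mul_single_one_mul_apply (A B : Matrix ι ι R) (i j x y : ι) :
    (A * single i j (1 : R) * B) x y = A x i * B j y := by
  simp [mul_apply, single_apply, ite_and]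

variable [LinearOrder R] [IsStrictOrderedRing R]

theorem abs_mul_abs_le_of_mul_eq_one {A B : Matrix ι ι R} (hBA : B * A = 1) {C : R}
    (hC : ∀ x i j y, i ≠ j → |A x i| * |B j y| ≤ C) {i j : ι} (hij : i ≠ j) (x y : ι) :
    |A x i| * |B i y| ≤ Fintype.card ι * C ^ 2 := by
  have hfactor : A x i * B i y = ∑ z, (A x i * B j z) * (A z j * B i y) := by
    have hjj : ∑ z, B j z * A z j = 1 := by simpa [mul_apply] using congrFun (congrFun hBA j) j
    rw [← mul_one (A x i * B i y), ← hjj, Finset.mul_sum]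
    exact Finset.sum_congr rfl fun z _ ↦ by ring
  have hC0 : 0 ≤ C := (mul_nonneg (abs_nonneg _) (abs_nonneg _)).trans (hC x i j y hij)
  calc |A x i| * |B i y| = |∑ z, (A x i * B j z) * (A z j * B i y)| := by
        rw [← abs_mul, hfactor]
    _ ≤ ∑ z, |A x i| * |B j z| * (|A z j| * |B i y|) := by
        simpa only [abs_mul] using
          Finset.abs_sum_le_sum_abs (fun z ↦ (A x i * B j z) * (A z j * B i y)) _
    _ ≤ ∑ _z : ι, C * C := Finset.sum_le_sum fun z _ ↦
        mul_le_mul (hC _ _ _ _ hij) (hC _ _ _ _ hij.symm) (by positivity) hC0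
    _ = Fintype.card ι * C ^ 2 := by simp [sq]

theorem pow_card_le_of_det_eq_one {B : Matrix ι ι R} (hB : B.det = 1) {a D : R} (ha : 0 ≤ a)
    (h : ∀ j y, a * |B j y| ≤ D) :
    a ^ Fintype.card ι ≤ (Fintype.card ι).factorial * D ^ Fintype.card ι := by
  have := det_le (A := a • B) (abv := AbsoluteValue.abs) fun j y ↦ by
    simpa [abs_mul, abs_of_nonneg ha] using h j y
  simpa [det_smul, hB, abs_of_nonneg ha, nsmul_eq_mul] using this

end Matrix

namespace Matrix.SpecialLinearGroup

variable {ι R : Type*} [Fintype ι] [DecidableEq ι] [CommRing R]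

theorem coe_inv_eq_of_mul_eq_one {g : SpecialLinearGroup ι R} {M : Matrix ι ι R}
    (h : M * g = 1) : ((g⁻¹ : SpecialLinearGroup ι R) : Matrix ι ι R) = M :=
  calc ((g⁻¹ : SpecialLinearGroup ι R) : Matrix ι ι R) = M * g * ↑(g⁻¹) := by rw [h, one_mul]
    _ = M := by rw [mul_assoc, ← coe_mul, mul_inv_cancel, coe_one, mul_one]

def signedPerm (i₀ : ι) (σ : Perm ι) : SpecialLinearGroup ι R :=
  ⟨σ⁻¹.permMatrix R * diagonal (Function.update 1 i₀ ((Perm.sign σ : ℤ) : R)), by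
    rw [det_mul, det_permutation, det_diagonal,
      Finset.prod_update_of_mem (Finset.mem_univ _), Perm.sign_inv]
    simp [← Int.cast_mul, ← Units.val_mul]⟩

theorem coe_signedPerm_inv (i₀ : ι) (σ : Perm ι) :
    ((signedPerm i₀ σ)⁻¹ : SpecialLinearGroup ι R) =
      diagonal (Function.update 1 i₀ ((Perm.sign σ : ℤ) : R)) * σ.permMatrix R := by
  refine coe_inv_eq_of_mul_eq_one ?_
  rw [signedPerm, coe_mk, mul_assoc, ← mul_assoc (σ.permMatrix R), ← permMatrix_mul,
    inv_mul_cancel, permMatrix_one, one_mul, diagonal_mul_diagonal, ← diagonal_one]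
  congr 1
  ext j
  rcases eq_or_ne j i₀ with rfl | hj
  · simp [← Int.cast_mul, ← Units.val_mul]
  · simp [hj]

variable [LinearOrder R] [IsStrictOrderedRing R]

theorem abs_update_one_sign_apply (i₀ : ι) (σ : Perm ι) (j : ι) :
    |Function.update (1 : ι → R) i₀ ((Perm.sign σ : ℤ) : R) j| = 1 := by
  rcases Int.units_eq_one_or (Perm.sign σ) with h | h <;>
    simp [h, Function.update_apply, apply_ite (fun a : R ↦ |a|)]

theorem abs_mul_signedPerm_apply (i₀ : ι) (σ : Perm ι) (A : Matrix ι ι R) (x j : ι) :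
    |(A * (signedPerm i₀ σ : SpecialLinearGroup ι R)) x j| = |A x (σ j)| := by
  rw [signedPerm, coe_mk, ← mul_assoc, mul_diagonal, abs_mul, abs_update_one_sign_apply, mul_one,
    Perm.permMatrix, PEquiv.mul_toMatrix_toPEquiv]
  rfl

theorem abs_signedPerm_inv_mul_apply (i₀ : ι) (σ : Perm ι) (B : Matrix ι ι R) (i y : ι) :
    |(((signedPerm i₀ σ)⁻¹ : SpecialLinearGroup ι R) * B) i y| = |B (σ i) y| := by
  rw [coe_signedPerm_inv, mul_assoc, diagonal_mul, abs_mul, abs_update_one_sign_apply, one_mul,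
    Perm.permMatrix, PEquiv.toMatrix_toPEquiv_mul]
  rfl

-- `σ` moves the largest off-diagonal product `|g x c| * |g⁻¹ r y|` into column `i₀`, row `i₁`.
theorem exists_signedPerm_offDiag_le {i₀ i₁ : ι} (h01 : i₀ ≠ i₁) (g : SpecialLinearGroup ι R) :
    ∃ σ : Perm ι, ∀ C : R,
      (∀ x y, |(g * signedPerm i₀ σ : SpecialLinearGroup ι R) x i₀ *
        ((g * signedPerm i₀ σ)⁻¹ : SpecialLinearGroup ι R) i₁ y| ≤ C) →
      ∀ x i j y, i ≠ j → |g x i| * |g⁻¹ j y| ≤ C := by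
  obtain ⟨⟨x, c, r, y⟩, hmem, hmax⟩ := Finset.exists_max_image
    ({t | t.2.1 ≠ t.2.2.1} : Finset (ι × ι × ι × ι))
    (fun t ↦ |g t.1 t.2.1| * |g⁻¹ t.2.2.1 t.2.2.2|) ⟨(i₀, i₀, i₁, i₀), by simpa using h01⟩
  obtain ⟨σ, hσ₀, hσ₁⟩ := Perm.exists_apply_eq_and_apply_eq h01 (Finset.mem_filter.mp hmem).2
  refine ⟨σ, fun C hC x' i j y' hij ↦ (hmax (x', i, j, y') (by simpa using hij)).trans ?_⟩
  have := hC x y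
  rwa [_root_.mul_inv_rev, coe_mul, coe_mul, abs_mul, abs_mul_signedPerm_apply,
    abs_signedPerm_inv_mul_apply, hσ₀, hσ₁] at this

theorem exists_abs_apply_le_of_offDiag [Nontrivial ι] (C : R) :
    ∃ M, ∀ g : SpecialLinearGroup ι R, (∀ x i j y, i ≠ j → |g x i| * |g⁻¹ j y| ≤ C) →
      ∀ x i, |g x i| ≤ M := by
  set D := max C (Fintype.card ι * C ^ 2)
  refine ⟨max 1 ((Fintype.card ι).factorial * D ^ Fintype.card ι), fun g hC x i ↦ ?_⟩
  have hprod : ∀ j y, |g x i| * |g⁻¹ j y| ≤ D := fun j y ↦ by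
    rcases eq_or_ne i j with rfl | hij
    · obtain ⟨k, hk⟩ := exists_ne i
      have hinv : ((g⁻¹ : SpecialLinearGroup ι R) : Matrix ι ι R) * g = 1 := by
        rw [coe_inv, adjugate_mul, g.2, one_smul]
      exact (abs_mul_abs_le_of_mul_eq_one hinv hC hk.symm x y).trans (le_max_right _ _)
    · exact (hC x i j y hij).trans (le_max_left _ _)
  have hpow := pow_card_le_of_det_eq_one (g⁻¹).2 (abs_nonneg _) hprod
  rcases le_or_gt |g x i| 1 with h1 | h1
  · exact h1.trans (le_max_left _ _)
  · exact (le_self_pow₀ h1.le Fintype.card_ne_zero).trans (hpow.trans (le_max_right _ _))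

theorem abs_mul_le_of_commutator_transvection {i₀ i₁ : ι} (h01 : i₀ ≠ i₁)
    (h : SpecialLinearGroup ι R) {E : R}
    (hE : ∀ x y, |(h * transvection h01 1 * h⁻¹ * (transvection h01 1)⁻¹ :
      SpecialLinearGroup ι R) x y| ≤ E) (x y : ι) :
    |h x i₀ * h⁻¹ i₁ y| ≤ 2 * E + 1 := by
  set u := transvection h01 (1 : R)
  set X := h * u * h⁻¹ * u⁻¹
  have hXu : ((X * u : SpecialLinearGroup ι R) : Matrix ι ι R) =
      1 + (h : Matrix ι ι R) * single i₀ i₁ 1 * ((h⁻¹ : SpecialLinearGroup ι R) : Matrix ι ι R) := by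
    rw [show X * u = h * u * h⁻¹ from inv_mul_cancel_right _ _, coe_mul, coe_mul,
      transvection_coe, mul_add, mul_one, add_mul, ← coe_mul, mul_inv_cancel, coe_one]
  have hentry := congrFun (congrFun hXu x) y
  rw [coe_mul, transvection_coe, mul_add, mul_one] at hentry
  simp only [add_apply, mul_single_one_mul_apply] at hentry
  have hcol : |((X : Matrix ι ι R) * single i₀ i₁ (1 : R)) x y| ≤ E := by
    by_cases hy : y = i₁
    · rw [hy, mul_single_apply_same, mul_one]
      exact hE x i₀
    · rw [mul_single_apply_of_ne _ _ _ _ _ hy, abs_zero]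
      exact (abs_nonneg _).trans (hE x y)
  have hone : |(1 : Matrix ι ι R) x y| ≤ 1 := by
    rw [one_apply]
    split_ifs <;> simp
  rw [abs_le] at hcol hone ⊢
  have hX := abs_le.mp (hE x y)
  constructor <;> linarith [hX.1, hX.2, hcol.1, hcol.2, hone.1, hone.2]

theorem isCompact_setOf_abs_apply_le (n : ℕ) (C : ℝ) :
    IsCompact {g : SpecialLinearGroup (Fin n) ℝ | ∀ i j, |g i j| ≤ C} := by
  have hemb : Topology.IsClosedEmbedding (Subtype.val : SpecialLinearGroup (Fin n) ℝ → _) :=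
    (isClosed_eq continuous_id.matrix_det continuous_const).isClosedEmbedding_subtypeVal
  set box := (Set.univ.pi fun _ ↦ Set.univ.pi fun _ ↦ Set.Icc (-C) C :
      Set (Matrix (Fin n) (Fin n) ℝ))
  have hbox : IsCompact box := isCompact_univ_pi fun _ ↦ isCompact_univ_pi fun _ ↦ isCompact_Icc
  have hset : {g : SpecialLinearGroup (Fin n) ℝ | ∀ i j, |g i j| ≤ C} = Subtype.val ⁻¹' box := by
    ext g
    simp only [Set.mem_ofPred_eq, abs_le]
    exact ⟨fun h i _ j _ ↦ h i j, fun h i j ↦ h i trivial j trivial⟩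
  exact hset ▸ hemb.isCompact_preimage hbox

end Matrix.SpecialLinearGroup

theorem IsCompact.exists_forall_abs_apply_le {n : ℕ} {K : Set (SpecialLinearGroup (Fin n) ℝ)}
    (hK : IsCompact K) : ∃ E, ∀ g ∈ K, ∀ i j, |g i j| ≤ E := by
  have hval : Continuous fun g : SpecialLinearGroup (Fin n) ℝ ↦ (g : Matrix (Fin n) (Fin n) ℝ) :=
    continuous_subtype_val
  obtain ⟨E, hE⟩ := hK.exists_bound_of_continuousOn (E := Fin n → Fin n → ℝ) hval.continuousOn
  exact ⟨E, fun g hg i j ↦ (norm_le_pi_norm (g i) j).trans ((norm_le_pi_norm _ i).trans (hE g hg))⟩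

open Matrix.SpecialLinearGroup in
/-- for any unbounded sequence `(g_m)` in `SL(n, ℝ)` (`n ≥ 2`) there
are sequences `(k_m)`, `(k'_m)` lying in a compact set and an element `u` such that
the commutators `[k_m g_m k'_m, u]` form an unbounded sequence. -/
theorem stmt_17 (n : ℕ) (hn : 2 ≤ n) (g : ℕ → Matrix.SpecialLinearGroup (Fin n) ℝ)
    (hg : ¬ ∃ K : Set (Matrix.SpecialLinearGroup (Fin n) ℝ),
      IsCompact K ∧ ∀ m, g m ∈ K) :
    ∃ (k k' : ℕ → Matrix.SpecialLinearGroup (Fin n) ℝ)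
      (u : Matrix.SpecialLinearGroup (Fin n) ℝ),
      (∃ C : Set (Matrix.SpecialLinearGroup (Fin n) ℝ),
        IsCompact C ∧ (∀ m, k m ∈ C) ∧ (∀ m, k' m ∈ C)) ∧
      ¬ ∃ K : Set (Matrix.SpecialLinearGroup (Fin n) ℝ), IsCompact K ∧ ∀ m,
        (k m * g m * k' m) * u * (k m * g m * k' m)⁻¹ * u⁻¹ ∈ K := by
  have : Nontrivial (Fin n) := Fin.nontrivial_iff_two_le.mpr hn
  obtain ⟨i₀, i₁, h01⟩ := exists_pair_ne (Fin n)
  choose σ hσ using fun m ↦ exists_signedPerm_offDiag_le h01 (g m)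
  refine ⟨1, fun m ↦ signedPerm i₀ (σ m), transvection h01 1,
    ⟨insert 1 (Set.range (signedPerm i₀)), ((Set.finite_range _).insert 1).isCompact,
      fun _ ↦ Set.mem_insert _ _, fun m ↦ Set.mem_insert_of_mem _ ⟨σ m, rfl⟩⟩, ?_⟩
  rintro ⟨K, hK, hcomm⟩
  obtain ⟨E, hE⟩ := hK.exists_forall_abs_apply_le
  obtain ⟨M, hM⟩ := exists_abs_apply_le_of_offDiag (ι := Fin n) (2 * E + 1)
  refine hg ⟨_, isCompact_setOf_abs_apply_le n M, fun m ↦ hM (g m) (hσ m _ fun x y ↦ ?_)⟩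
  refine abs_mul_le_of_commutator_transvection h01 _ (fun x y ↦ ?_) x y
  simpa using hE _ (hcomm m) x y
end

section
/- Let G be a locally compact group and L : G → [0,∞) a function that is bounded on compact subsets of G and satisfies the control axiom: there is a nondecreasing function φ : [0,∞) → [0,∞) such that L(xy) ≤ φ(max(L(x), L(y))) for all x, y ∈ G. Then there exists a semigroup length L₁ on G (i.e. L₁ is bounded on compact subsets and L₁(xy) ≤ L₁(x) + L₁(y) for all x,y) that is coarsely equivalent to L: there exist nondecreasing functions u₁, u₂ : [0,∞) → [0,∞) with u₁(t) → ∞ and u₂(t) → ∞ as t → ∞ such that L ≤ u₂ ∘ L₁ and L₁ ≤ u₁ ∘ L. Moreover, if L(x) = L(x⁻¹) for all x, then L₁ can be taken symmetric as well. -/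
open scoped NNReal Topology

/-!
Take thresholds `a₀ = 0`, `aₙ₊₁ = max (φ aₙ) (aₙ + 1)` and let `ι t` be the least `n` with
`t ≤ aₙ`. Since `φ` is monotone, `φ` moves every value up by at most one threshold:
`ι (φ t) ≤ ι t + 1`. The control axiom then gives `ι (L (xy)) ≤ max (ι (L x)) (ι (L y)) + 1`,
so `ι ∘ L + 1` is subadditive; it is coarsely equivalent to `L` because the thresholds increase
strictly to infinity.
-/

section ControlScale

variable (φ : ℝ → ℝ)

noncomputable def controlSeq : ℕ → ℝ
  | 0 => 0
  | n + 1 => max (φ (controlSeq n)) (controlSeq n + 1)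

lemma apply_controlSeq_le (n : ℕ) : φ (controlSeq φ n) ≤ controlSeq φ (n + 1) :=
  le_max_left _ _

lemma controlSeq_strictMono : StrictMono (controlSeq φ) :=
  strictMono_nat_of_lt_succ fun _ => (lt_add_one _).trans_le (le_max_right _ _)

lemma natCast_le_controlSeq (n : ℕ) : (n : ℝ) ≤ controlSeq φ n := by
  induction n with
  | zero => simp [controlSeq]
  | succ n ih =>
    push_cast
    exact (add_le_add_left ih 1).trans (le_max_right _ _)

lemma tendsto_controlSeq_atTop : Filter.Tendsto (controlSeq φ) Filter.atTop Filter.atTop :=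
  Filter.tendsto_atTop_mono (natCast_le_controlSeq φ) tendsto_natCast_atTop_atTop

lemma exists_le_controlSeq (t : ℝ) : ∃ n, t ≤ controlSeq φ n :=
  let ⟨n, hn⟩ := exists_nat_ge t
  ⟨n, hn.trans (natCast_le_controlSeq φ n)⟩

open scoped Classical in
noncomputable def controlIndex (t : ℝ) : ℕ := Nat.find (exists_le_controlSeq φ t)

lemma le_controlSeq_controlIndex (t : ℝ) : t ≤ controlSeq φ (controlIndex φ t) := by
  classical
  exact Nat.find_spec (exists_le_controlSeq φ t)

lemma controlIndex_le_of_le {t : ℝ} {n : ℕ} (h : t ≤ controlSeq φ n) : controlIndex φ t ≤ n := by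
  classical
  exact Nat.find_min' _ h

lemma controlIndex_mono : Monotone (controlIndex φ) := fun _ _ hst =>
  controlIndex_le_of_le φ (hst.trans (le_controlSeq_controlIndex φ _))

lemma controlIndex_apply_le {φ : ℝ → ℝ} (hφ : Monotone φ) (t : ℝ) :
    controlIndex φ (φ t) ≤ controlIndex φ t + 1 :=
  controlIndex_le_of_le φ <|
    (hφ (le_controlSeq_controlIndex φ t)).trans (apply_controlSeq_le φ _)

lemma tendsto_controlIndex_atTop :
    Filter.Tendsto (controlIndex φ) Filter.atTop Filter.atTop := by
  refine Filter.tendsto_atTop.2 fun N => ?_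
  filter_upwards [Filter.eventually_gt_atTop (controlSeq φ N)] with t ht
  by_contra! h
  exact ht.not_ge <| (le_controlSeq_controlIndex φ t).trans
    ((controlSeq_strictMono φ).monotone h.le)

end ControlScale

lemma controlIndex_mul_le {M : Type*} [Mul M] (L : M → ℝ) {φ : ℝ → ℝ} (hφ : Monotone φ)
    (hctrl : ∀ x y, L (x * y) ≤ φ (max (L x) (L y))) (x y : M) :
    controlIndex φ (L (x * y)) + 1 ≤ controlIndex φ (L x) + 1 + (controlIndex φ (L y) + 1) := by
  have hmax : controlIndex φ (max (L x) (L y)) ≤ controlIndex φ (L x) + controlIndex φ (L y) := by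
    rw [(controlIndex_mono φ).map_max]
    exact max_le_add_of_nonneg (Nat.zero_le _) (Nat.zero_le _)
  have := (controlIndex_mono φ (hctrl x y)).trans (controlIndex_apply_le hφ _)
  omega

theorem stmt_18_general {G : Type*} [Group G] [TopologicalSpace G] (L : G → ℝ)
    (hbdd : ∀ K : Set G, IsCompact K → ∃ M : ℝ, ∀ x ∈ K, L x ≤ M)
    (φ : ℝ → ℝ) (hφ : Monotone φ)
    (hctrl : ∀ x y, L (x * y) ≤ φ (max (L x) (L y))) :
    ∃ L₁ : G → ℝ, IsSemigroupLength L₁ ∧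
      (∃ u₁ u₂ : ℝ → ℝ, Monotone u₁ ∧ Monotone u₂ ∧
        Filter.Tendsto u₁ Filter.atTop Filter.atTop ∧
        Filter.Tendsto u₂ Filter.atTop Filter.atTop ∧
        (∀ x, L₁ x ≤ u₁ (L x)) ∧ (∀ x, L x ≤ u₂ (L₁ x))) ∧
      ((∀ x, L x = L x⁻¹) → ∀ x, L₁ x = L₁ x⁻¹) := by
  have hι : Monotone fun t => (controlIndex φ t : ℝ) + 1 := fun s t hst => by
    simpa using controlIndex_mono φ hst
  refine ⟨fun x => (controlIndex φ (L x) : ℝ) + 1,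
    ⟨fun x => by positivity, fun K hK => ?_, fun x y => ?_⟩,
    ⟨fun t => (controlIndex φ t : ℝ) + 1, fun s => controlSeq φ ⌈s⌉₊, hι,
      fun s t hst => (controlSeq_strictMono φ).monotone (Nat.ceil_mono hst), ?_,
      (tendsto_controlSeq_atTop φ).comp tendsto_nat_ceil_atTop, fun x => le_rfl, fun x => ?_⟩,
    fun hsym x => by simp only [hsym x]⟩
  · obtain ⟨M, hM⟩ := hbdd K hK
    exact ⟨controlIndex φ M + 1, fun x hx => hι (hM x hx)⟩
  · dsimp only
    exact_mod_cast controlIndex_mul_le L hφ hctrl x y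
  · exact Filter.tendsto_atTop_add_const_right _ 1
      (tendsto_natCast_atTop_atTop.comp (tendsto_controlIndex_atTop φ))
  · calc L x ≤ controlSeq φ (controlIndex φ (L x)) := le_controlSeq_controlIndex φ _
      _ ≤ controlSeq φ ⌈(controlIndex φ (L x) : ℝ) + 1⌉₊ :=
        (controlSeq_strictMono φ).monotone (by exact_mod_cast (Nat.lt_ceil.2 (by simp)).le)

/-- every weak length (locally bounded with the control axiom) on a
locally compact group is coarsely equivalent to a semigroup length, which may be
taken symmetric whenever the weak length is. -/
theorem stmt_18 {G : Type*} [Group G] [TopologicalSpace G] [IsTopologicalGroup G]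
    [LocallyCompactSpace G] (L : G → ℝ) (hnonneg : ∀ x, 0 ≤ L x)
    (hbdd : ∀ K : Set G, IsCompact K → ∃ M : ℝ, ∀ x ∈ K, L x ≤ M)
    (φ : ℝ → ℝ) (hφ : Monotone φ)
    (hctrl : ∀ x y, L (x * y) ≤ φ (max (L x) (L y))) :
    ∃ L₁ : G → ℝ, IsSemigroupLength L₁ ∧
      (∃ u₁ u₂ : ℝ → ℝ, Monotone u₁ ∧ Monotone u₂ ∧
        Filter.Tendsto u₁ Filter.atTop Filter.atTop ∧
        Filter.Tendsto u₂ Filter.atTop Filter.atTop ∧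
        (∀ x, L₁ x ≤ u₁ (L x)) ∧ (∀ x, L x ≤ u₂ (L₁ x))) ∧
      ((∀ x, L x = L x⁻¹) → ∀ x, L₁ x = L₁ x⁻¹) :=
  stmt_18_general L hbdd φ hφ hctrl
end
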